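/- arXiv:2112.00381 — 7 statements merged into one kernel-verified Lean document; each statement's English description precedes it below -/
import Mathlib

section
/- Let n ≥ 1, let a, b ∈ ℂⁿ, set G_j := 1 + Σ_{k=j}^n a_k b_k for 1 ≤ j ≤ n+1 (so G_{n+1} = 1), and suppose s_1, …, s_{n+1} ∈ ℂ are nonzero with s_j² = G_j and s_{n+1} = 1. Define the upper-triangular n×n matrix g₊ by (g₊)_{jj} = s_j/s_{j+1}, (g₊)_{jk} = a_j b_k/(s_k s_{k+1}) for j < k, (g₊)_{jk} = 0 for j > k, and the lower-triangular n×n matrix k by k_{jj} = s_j/s_{j+1}, k_{jk} = a_j b_k/(s_j s_{j+1}) for j > k, k_{jk} = 0 for j < k. Then g₊ · k = 1ₙ + a bᵀ, where (a bᵀ)_{jl} = a_j b_l. In particular, writing g₋ := k⁻¹ (k is invertible since its diagonal entries are nonzero), one has 1ₙ + a bᵀ = g₊ g₋⁻¹. -/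
/-!
Since `s_j² - s_{j+1}² = a_j b_j`, the diagonal entry `s_j / s_{j+1}` equals
`a_j b_j / (s_j s_{j+1}) + s_{j+1} / s_j`. Hence `g₊ = U + D` and `k = L + D`, where
`D = diag (s_{j+1} / s_j)`, `U_{jk} = [j ≤ k] a_j b_k / (s_k s_{k+1})` and
`L_{jk} = [k ≤ j] a_j b_k / (s_j s_{j+1})`. The entry `(U L)_{jl}` is
`a_j b_l ∑_{m ≥ max j l} a_m b_m / (s_m² s_{m+1}²)`, and this sum telescopes to
`1 - 1 / s_{max j l}²` because each term is `1 / s_{m+1}² - 1 / s_m²` and `s_{n+1} = 1`.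
Adding `U D`, `D L` and `D²` gives `1 + a_j b_l` entrywise.
-/

open Matrix BigOperators

noncomputable section

attribute [local instance] Matrix.normedAddCommGroup Matrix.normedSpace

/-- complex-valued sign of an integer, with `csgn 0 = 0`. -/
def csgn (m : ℤ) : ℂ := (m.sign : ℂ)

/-- Kronecker delta with values in `ℂ`. -/
def cdelta {K : Type*} [DecidableEq K] (i j : K) : ℂ := if i = j then 1 else 0

theorem Fintype.sum_ite_le_eq_add_sum_ite_lt {ι M : Type*} [Fintype ι] [LinearOrder ι]
    [AddCommMonoid M] (g : ι → M) (i : ι) :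
    ∑ m, (if i ≤ m then g m else 0) = g i + ∑ m, if i < m then g m else 0 := by
  have hsplit : ∀ m, (if i ≤ m then g m else 0)
      = (if i = m then g m else 0) + (if i < m then g m else 0) := by
    intro m
    rcases lt_trichotomy i m with h | rfl | h
    · simp [h.le, h.ne, h]
    · simp
    · simp [h.not_ge, h.ne', h.not_gt]
  simp only [hsplit, Finset.sum_add_distrib, Finset.sum_ite_eq, Finset.mem_univ, if_true]

theorem Fin.sum_ite_le_castSucc_sub {M : Type*} [AddCommGroup M] {n : ℕ}
    (f : Fin (n + 1) → M) (p : Fin (n + 1)) :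
    ∑ m : Fin n, (if p ≤ m.castSucc then f m.succ - f m.castSucc else 0)
      = f (Fin.last n) - f p := by
  induction p using Fin.reverseInduction with
  | last => simp [(Fin.castSucc_lt_last _).not_ge]
  | cast i ih =>
    simp only [Fin.castSucc_le_castSucc_iff, Fintype.sum_ite_le_eq_add_sum_ite_lt]
    simp only [← Fin.succ_le_castSucc_iff, ih]
    abel

theorem Matrix.IsLowerTriangular.isUnit_det {K ι : Type*} [Field K] [Fintype ι] [DecidableEq ι]
    [LinearOrder ι] {M : Matrix ι ι K} (hM : M.IsLowerTriangular) (hdiag : ∀ i, M i i ≠ 0) :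
    IsUnit M.det := by
  simpa [det_of_isLowerTriangular M hM, Finset.prod_ne_zero_iff] using hdiag

section Factorization

variable {n : ℕ} {a b : Fin n → ℂ} {s : Fin (n + 1) → ℂ}

theorem sq_castSucc_eq_sq_succ_add
    (hsq : ∀ j, s j ^ 2 = 1 + ∑ k : Fin n, (if (j : ℕ) ≤ (k : ℕ) then a k * b k else 0))
    (m : Fin n) : s m.castSucc ^ 2 = s m.succ ^ 2 + a m * b m := by
  simp only [hsq, Fin.val_castSucc, Fin.val_succ, Nat.add_one_le_iff, Fin.val_fin_le,
    Fin.val_fin_lt, Fintype.sum_ite_le_eq_add_sum_ite_lt]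
  ring

theorem sum_ite_le_div_sq_mul_sq (hs0 : ∀ j, s j ≠ 0)
    (hstep : ∀ m : Fin n, s m.castSucc ^ 2 = s m.succ ^ 2 + a m * b m)
    (hlast : s (Fin.last n) = 1) (p : Fin (n + 1)) :
    ∑ m : Fin n, (if p ≤ m.castSucc then a m * b m / (s m.castSucc ^ 2 * s m.succ ^ 2) else 0)
      = 1 - 1 / s p ^ 2 := by
  have htele : ∀ m : Fin n, a m * b m / (s m.castSucc ^ 2 * s m.succ ^ 2)
      = 1 / s m.succ ^ 2 - 1 / s m.castSucc ^ 2 := by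
    intro m
    have := hs0 m.castSucc
    have := hs0 m.succ
    field_simp
    linear_combination -hstep m
  simp only [htele, Fin.sum_ite_le_castSucc_sub (fun j => 1 / s j ^ 2), hlast, one_pow, div_one]

theorem castSucc_div_succ_eq_add (hs0 : ∀ j, s j ≠ 0)
    (hstep : ∀ m : Fin n, s m.castSucc ^ 2 = s m.succ ^ 2 + a m * b m) (m : Fin n) :
    s m.castSucc / s m.succ = a m * b m / (s m.castSucc * s m.succ) + s m.succ / s m.castSucc := by
  have := hs0 m.castSucc
  have := hs0 m.succ
  field_simp
  linear_combination hstep m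

theorem eq_upper_add_diagonal (hs0 : ∀ j, s j ≠ 0)
    (hstep : ∀ m : Fin n, s m.castSucc ^ 2 = s m.succ ^ 2 + a m * b m)
    {gp : Matrix (Fin n) (Fin n) ℂ}
    (hgp : ∀ j k, gp j k =
      if j = k then s j.castSucc / s j.succ
      else if j < k then a j * b k / (s k.castSucc * s k.succ) else 0) :
    gp = of (fun j k => if j ≤ k then a j * b k / (s k.castSucc * s k.succ) else 0)
      + diagonal (fun k => s k.succ / s k.castSucc) := by
  ext j k
  rcases lt_trichotomy j k with h | rfl | h
  · simp [hgp, h, h.le, h.ne]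
  · simp [hgp, castSucc_div_succ_eq_add hs0 hstep]
  · simp [hgp, h.ne', h.not_gt, h.not_ge]

theorem eq_lower_add_diagonal (hs0 : ∀ j, s j ≠ 0)
    (hstep : ∀ m : Fin n, s m.castSucc ^ 2 = s m.succ ^ 2 + a m * b m)
    {km : Matrix (Fin n) (Fin n) ℂ}
    (hkm : ∀ j k, km j k =
      if j = k then s j.castSucc / s j.succ
      else if k < j then a j * b k / (s j.castSucc * s j.succ) else 0) :
    km = of (fun j k => if k ≤ j then a j * b k / (s j.castSucc * s j.succ) else 0)
      + diagonal (fun k => s k.succ / s k.castSucc) := by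
  ext j k
  rcases lt_trichotomy j k with h | rfl | h
  · simp [hkm, h.ne, h.not_gt, h.not_ge]
  · simp [hkm, castSucc_div_succ_eq_add hs0 hstep]
  · simp [hkm, h, h.le, h.ne']

theorem sum_upper_mul_lower (hs0 : ∀ j, s j ≠ 0)
    (hstep : ∀ m : Fin n, s m.castSucc ^ 2 = s m.succ ^ 2 + a m * b m)
    (hlast : s (Fin.last n) = 1) (j l : Fin n) :
    ∑ m, (if j ≤ m then a j * b m / (s m.castSucc * s m.succ) else 0)
        * (if l ≤ m then a m * b l / (s m.castSucc * s m.succ) else 0)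
      = a j * b l * (1 - 1 / s (max j l).castSucc ^ 2) := by
  rw [← sum_ite_le_div_sq_mul_sq hs0 hstep hlast, Finset.mul_sum]
  refine Finset.sum_congr rfl fun m _ => ?_
  simp only [Fin.castSucc_le_castSucc_iff, max_le_iff, ite_and]
  split_ifs
  · field_simp
  all_goals simp

theorem mul_eq_one_add_vecMulVec (hs0 : ∀ j, s j ≠ 0)
    (hstep : ∀ m : Fin n, s m.castSucc ^ 2 = s m.succ ^ 2 + a m * b m)
    (hlast : s (Fin.last n) = 1) {gp km : Matrix (Fin n) (Fin n) ℂ}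
    (hgp : ∀ j k, gp j k =
      if j = k then s j.castSucc / s j.succ
      else if j < k then a j * b k / (s k.castSucc * s k.succ) else 0)
    (hkm : ∀ j k, km j k =
      if j = k then s j.castSucc / s j.succ
      else if k < j then a j * b k / (s j.castSucc * s j.succ) else 0) :
    gp * km = 1 + vecMulVec a b := by
  rw [eq_upper_add_diagonal hs0 hstep hgp, eq_lower_add_diagonal hs0 hstep hkm, add_mul, mul_add,
    mul_add, diagonal_mul_diagonal]
  ext j l
  simp only [Matrix.add_apply, mul_diagonal, diagonal_mul]
  simp only [mul_apply, of_apply, sum_upper_mul_lower hs0 hstep hlast, diagonal_apply,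
    one_apply, vecMulVec_apply]
  have := hs0 j.castSucc
  have := hs0 l.castSucc
  have := hs0 j.succ
  have := hs0 l.succ
  rcases lt_trichotomy j l with h | rfl | h
  · simp only [max_eq_right h.le, h.le, h.ne, h.not_ge, if_true, if_false]
    field_simp
    ring
  · simp only [max_self, le_refl, if_true]
    field_simp
    linear_combination -hstep j
  · simp only [max_eq_left h.le, h.le, h.ne', h.not_ge, if_true, if_false]
    field_simp
    ring

end Factorization

theorem statement0_general (n : ℕ) (a b : Fin n → ℂ) (s : Fin (n + 1) → ℂ)
    (hs0 : ∀ j, s j ≠ 0)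
    (hsq : ∀ j, s j ^ 2 = 1 + ∑ k : Fin n, (if (j : ℕ) ≤ (k : ℕ) then a k * b k else 0))
    (hlast : s (Fin.last n) = 1)
    (gp km : Matrix (Fin n) (Fin n) ℂ)
    (hgp : ∀ j k, gp j k =
      if j = k then s j.castSucc / s j.succ
      else if j < k then a j * b k / (s k.castSucc * s k.succ) else 0)
    (hkm : ∀ j k, km j k =
      if j = k then s j.castSucc / s j.succ
      else if k < j then a j * b k / (s j.castSucc * s j.succ) else 0) :
    gp * km = 1 + Matrix.vecMulVec a b ∧
      1 + Matrix.vecMulVec a b = gp * (km⁻¹)⁻¹ := by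
  have hprod := mul_eq_one_add_vecMulVec hs0 (sq_castSucc_eq_sq_succ_add hsq) hlast hgp hkm
  have hkm_lower : km.IsLowerTriangular := fun i j hij => by
    have hij : i < j := OrderDual.toDual_lt_toDual.mp hij
    simp [hkm, hij.ne, hij.not_gt]
  have hkm_unit : IsUnit km.det :=
    hkm_lower.isUnit_det fun i => by simpa [hkm] using div_ne_zero (hs0 _) (hs0 _)
  exact ⟨hprod, by rw [nonsing_inv_nonsing_inv km hkm_unit, hprod]⟩

/-- the factorization identity `g₊ · k = 1ₙ + a bᵀ` and, with `g₋ := k⁻¹`,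
`1ₙ + a bᵀ = g₊ g₋⁻¹`. -/
theorem statement0 (n : ℕ) (hn : 1 ≤ n) (a b : Fin n → ℂ) (s : Fin (n + 1) → ℂ)
    (hs0 : ∀ j, s j ≠ 0)
    (hsq : ∀ j, s j ^ 2 = 1 + ∑ k : Fin n, (if (j : ℕ) ≤ (k : ℕ) then a k * b k else 0))
    (hlast : s (Fin.last n) = 1)
    (gp km : Matrix (Fin n) (Fin n) ℂ)
    (hgp : ∀ j k, gp j k =
      if j = k then s j.castSucc / s j.succ
      else if j < k then a j * b k / (s k.castSucc * s k.succ) else 0)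
    (hkm : ∀ j k, km j k =
      if j = k then s j.castSucc / s j.succ
      else if k < j then a j * b k / (s j.castSucc * s j.succ) else 0) :
    gp * km = 1 + Matrix.vecMulVec a b ∧
      1 + Matrix.vecMulVec a b = gp * (km⁻¹)⁻¹ :=
  statement0_general n a b s hs0 hsq hlast gp km hgp hkm
end
end

section
/- Let n ≥ 2, d ≥ 2. There exist open neighborhoods U of the origin in (ℂⁿ × ℂⁿ)^d and V of the origin in S(n,d) := Mat_{n×d}(ℂ) × Mat_{d×n}(ℂ) such that the map m (defined below with principal square roots) restricts to a holomorphic bijection from U onto V whose inverse is also holomorphic. -/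
open Matrix BigOperators

noncomputable section

attribute [local instance] Matrix.normedAddCommGroup Matrix.normedSpace

/-- The space `S(n,d) = Mat_{n×d}(ℂ) × Mat_{d×n}(ℂ)`. -/
abbrev Snd (n d : ℕ) : Type := Matrix (Fin n) (Fin d) ℂ × Matrix (Fin d) (Fin n) ℂ

/-- coordinate direction for `A_{iα}`. -/
def eA (n d : ℕ) (i : Fin n) (α : Fin d) : Snd n d := (Matrix.single i α 1, 0)

/-- coordinate direction for `B_{αi}`. -/
def eB (n d : ℕ) (α : Fin d) (i : Fin n) : Snd n d := (0, Matrix.single α i 1)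

/-- `{A_i^α, A_k^β}_κ` -/
def pAA (n d : ℕ) (κ : ℂ) (p : Snd n d) (i k : Fin n) (α β : Fin d) : ℂ :=
  κ / 2 * (csgn (((i : ℕ) : ℤ) - ((k : ℕ) : ℤ)) - csgn (((α : ℕ) : ℤ) - ((β : ℕ) : ℤ))) *
    p.1 k α * p.1 i β

/-- `{B_i^α, B_k^β}_κ` -/
def pBB (n d : ℕ) (κ : ℂ) (p : Snd n d) (i k : Fin n) (α β : Fin d) : ℂ :=
  -(κ / 2) * (csgn (((i : ℕ) : ℤ) - ((k : ℕ) : ℤ)) - csgn (((α : ℕ) : ℤ) - ((β : ℕ) : ℤ))) *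
    p.2 α k * p.2 β i

/-- `{A_i^α, B_k^β}_κ` -/
def pAB (n d : ℕ) (κ : ℂ) (p : Snd n d) (i : Fin n) (α : Fin d) (k : Fin n) (β : Fin d) : ℂ :=
  κ / 2 * cdelta i k * p.1 i α * p.2 β k
    + κ * cdelta i k * ∑ s : Fin n, (if i < s then p.1 s α * p.2 β s else 0)
    + κ / 2 * cdelta α β * p.1 i α * p.2 β k
    + κ * cdelta α β * ∑ μ : Fin d, (if μ < α then p.1 i μ * p.2 μ k else 0)
    + κ * cdelta α β * cdelta i k

/-- The bivector bracket `{F,H}_κ` on `S(n,d)` determined by the coordinate brackets. -/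
def brS (n d : ℕ) (κ : ℂ) (F H : Snd n d → ℂ) (p : Snd n d) : ℂ :=
  ∑ i : Fin n, ∑ α : Fin d, ∑ k : Fin n, ∑ β : Fin d,
    (pAA n d κ p i k α β * fderiv ℂ F p (eA n d i α) * fderiv ℂ H p (eA n d k β)
      + pAB n d κ p i α k β *
          (fderiv ℂ F p (eA n d i α) * fderiv ℂ H p (eB n d β k)
            - fderiv ℂ H p (eA n d i α) * fderiv ℂ F p (eB n d β k))
      + pBB n d κ p i k α β * fderiv ℂ F p (eB n d α i) * fderiv ℂ H p (eB n d β k))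

/-- The `d`-fold product `(ℂⁿ × ℂⁿ)^d`. -/
abbrev PSp (n d : ℕ) : Type := Fin d → (Fin n → ℂ) × (Fin n → ℂ)

/-- coordinate direction for `a_i^α`. -/
def ea (n d : ℕ) (α : Fin d) (i : Fin n) : PSp n d := Pi.single α (Pi.single i 1, 0)

/-- coordinate direction for `b_i^α`. -/
def eb (n d : ℕ) (α : Fin d) (i : Fin n) : PSp n d := Pi.single α (0, Pi.single i 1)

/-- `{a_i, a_k}_κ` on one copy of `S(n,1)`. -/
def paa1 (n : ℕ) (κ : ℂ) (y : (Fin n → ℂ) × (Fin n → ℂ)) (i k : Fin n) : ℂ :=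
  κ / 2 * csgn (((i : ℕ) : ℤ) - ((k : ℕ) : ℤ)) * y.1 k * y.1 i

/-- `{b_i, b_k}_κ` on one copy of `S(n,1)`. -/
def pbb1 (n : ℕ) (κ : ℂ) (y : (Fin n → ℂ) × (Fin n → ℂ)) (i k : Fin n) : ℂ :=
  -(κ / 2) * csgn (((i : ℕ) : ℤ) - ((k : ℕ) : ℤ)) * y.2 k * y.2 i

/-- `{a_i, b_k}_κ` on one copy of `S(n,1)`. -/
def pab1 (n : ℕ) (κ : ℂ) (y : (Fin n → ℂ) × (Fin n → ℂ)) (i k : Fin n) : ℂ :=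
  κ / 2 * cdelta i k * y.1 i * y.2 k
    + κ * cdelta i k * ∑ s : Fin n, (if i < s then y.1 s * y.2 s else 0)
    + κ / 2 * y.1 i * y.2 k
    + κ * cdelta i k

/-- The product Poisson bracket on `(ℂⁿ × ℂⁿ)^d`, the sum over the `d` copies of the
`S(n,1)`-brackets; coordinates from different copies Poisson-commute. -/
def brProd (n d : ℕ) (κ : ℂ) (F H : PSp n d → ℂ) (x : PSp n d) : ℂ :=
  ∑ α : Fin d, ∑ i : Fin n, ∑ k : Fin n,
    (paa1 n κ (x α) i k * fderiv ℂ F x (ea n d α i) * fderiv ℂ H x (ea n d α k)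
      + pab1 n κ (x α) i k *
          (fderiv ℂ F x (ea n d α i) * fderiv ℂ H x (eb n d α k)
            - fderiv ℂ H x (ea n d α i) * fderiv ℂ F x (eb n d α k))
      + pbb1 n κ (x α) i k * fderiv ℂ F x (eb n d α i) * fderiv ℂ H x (eb n d α k))

/-- `G_j^α = 1 + Σ_{k=j}^n a_k^α b_k^α` (`j` runs through `1,…,n+1`; `G_{n+1}^α = 1`). -/
def Gfun (n d : ℕ) (x : PSp n d) (α : Fin d) (j : Fin (n + 1)) : ℂ :=
  1 + ∑ k : Fin n, (if (j : ℕ) ≤ (k : ℕ) then (x α).1 k * (x α).2 k else 0)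

/-- `s_j^α`, the principal square root of `G_j^α`. -/
def sfun (n d : ℕ) (x : PSp n d) (α : Fin d) (j : Fin (n + 1)) : ℂ :=
  Gfun n d x α j ^ ((1 : ℂ) / 2)

/-- The upper-triangular matrix `g₊,α`. -/
def gP (n d : ℕ) (x : PSp n d) (α : Fin d) : Matrix (Fin n) (Fin n) ℂ :=
  Matrix.of fun j k =>
    if j = k then sfun n d x α j.castSucc / sfun n d x α j.succ
    else if j < k then (x α).1 j * (x α).2 k / (sfun n d x α k.castSucc * sfun n d x α k.succ)
    else 0

/-- The lower-triangular matrix `k_α` (i.e. `g₋,α⁻¹`). -/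
def kM (n d : ℕ) (x : PSp n d) (α : Fin d) : Matrix (Fin n) (Fin n) ℂ :=
  Matrix.of fun j k =>
    if j = k then sfun n d x α j.castSucc / sfun n d x α j.succ
    else if k < j then (x α).1 j * (x α).2 k / (sfun n d x α j.castSucc * sfun n d x α j.succ)
    else 0

/-- `h₊^m := g₊,1 ⋯ g₊,m` (empty product is `1ₙ`). -/
def hPl (n d : ℕ) (x : PSp n d) (m : ℕ) : Matrix (Fin n) (Fin n) ℂ :=
  (((List.finRange d).take m).map (gP n d x)).prod

/-- `h₋^m := k_m ⋯ k_1` (empty product is `1ₙ`). -/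
def hMl (n d : ℕ) (x : PSp n d) (m : ℕ) : Matrix (Fin n) (Fin n) ℂ :=
  ((((List.finRange d).take m).map (kM n d x)).reverse).prod

/-- `h₊^{α+1;γ} := g₊,α+1 ⋯ g₊,γ` (math indices `α+1,…,γ`; empty product is `1ₙ`). -/
def segP (n d : ℕ) (x : PSp n d) (α γ : ℕ) : Matrix (Fin n) (Fin n) ℂ :=
  ((((List.finRange d).take γ).drop α).map (gP n d x)).prod

/-- `h₋^{α+1;γ} := k_γ ⋯ k_{α+1}` (empty product is `1ₙ`). -/
def segM (n d : ℕ) (x : PSp n d) (α γ : ℕ) : Matrix (Fin n) (Fin n) ℂ :=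
  (((((List.finRange d).take γ).drop α).map (kM n d x)).reverse).prod

/-- The decoupling map `m : (a,b) ↦ (A,B)`, with columns `A^α = g₊,1 ⋯ g₊,α−1 a^α`
and rows `B^α = b^α k_{α−1} ⋯ k_1`. -/
def mmap (n d : ℕ) (x : PSp n d) : Snd n d :=
  (Matrix.of fun i α => (hPl n d x (α : ℕ) *ᵥ (x α).1) i,
   Matrix.of fun α i => ((x α).2 ᵥ* hMl n d x (α : ℕ)) i)

/-!
The map `m` is holomorphic near the origin: the `G_j^α` are polynomials equal to `1` at the
origin, so their principal square roots are holomorphic there and nonvanishing, and the entries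
of `g₊,α`, `k_α` and of their products are holomorphic. At the origin `g₊,α = k_α = 1` and
`a^α = b^α = 0`, so by the product rule the derivative of `m` at `0` is the linear isomorphism
stacking `a^α` as the columns of `A` and `b^α` as the rows of `B`. The holomorphic inverse
function theorem then yields the neighbourhoods `U` and `V`.
-/

open Set Topology

theorem ContDiffAt.exists_bijOn_inverse {𝕜 E F : Type*} [RCLike 𝕜] [NormedAddCommGroup E]
    [NormedSpace 𝕜 E] [CompleteSpace E] [NormedAddCommGroup F] [NormedSpace 𝕜 F]
    {f : E → F} {f' : E ≃L[𝕜] F} {a : E} (hf : ContDiffAt 𝕜 1 f a)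
    (hf' : HasFDerivAt f (f' : E →L[𝕜] F) a) :
    ∃ (U : Set E) (V : Set F) (g : F → E), IsOpen U ∧ IsOpen V ∧ a ∈ U ∧ f a ∈ V ∧
      DifferentiableOn 𝕜 f U ∧ BijOn f U V ∧ DifferentiableOn 𝕜 g V ∧
      (∀ x ∈ U, g (f x) = x) ∧ ∀ y ∈ V, f (g y) = y := by
  set φ := hf.toOpenPartialHomeomorph f hf' one_ne_zero
  have hφa : φ.symm (f a) = a := hf.localInverse_apply_image hf' one_ne_zero
  have hg : ContDiffAt 𝕜 1 φ.symm (f a) := hf.to_localInverse hf' one_ne_zero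
  have hgood : ∀ᶠ y in 𝓝 (f a), y ∈ φ.target ∧ ContDiffAt 𝕜 1 φ.symm y ∧
      ContDiffAt 𝕜 1 f (φ.symm y) :=
    (φ.open_target.eventually_mem (hf.image_mem_toOpenPartialHomeomorph_target hf' one_ne_zero)).and
      ((hg.eventually (by simp)).and
        (hg.continuousAt.eventually (by rw [hφa]; exact hf.eventually (by simp))))
  obtain ⟨V, hVgood, hV, hfaV⟩ := mem_nhds_iff.1 hgood
  set ψ := φ.symm.restrOpen V hV
  refine ⟨ψ.target, ψ.source, φ.symm, ψ.open_target, ψ.open_source,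
    ⟨hf.mem_toOpenPartialHomeomorph_source hf' one_ne_zero, hfaV⟩,
    ⟨(hVgood hfaV).1, hfaV⟩, fun x hx => ?_, ψ.symm.bijOn,
    fun y hy => ((hVgood hy.2).2.1.differentiableAt one_ne_zero).differentiableWithinAt,
    fun x hx => φ.left_inv hx.1, fun y hy => φ.right_inv hy.1⟩
  have hfx : ContDiffAt 𝕜 1 f (φ.symm (φ x)) := (hVgood hx.2).2.2
  rw [φ.left_inv hx.1] at hfx
  exact (hfx.differentiableAt one_ne_zero).differentiableWithinAt

section MatrixCalculus

variable {𝕜 E ι : Type*} [NontriviallyNormedField 𝕜] [NormedAddCommGroup E] [NormedSpace 𝕜 E]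
  [Fintype ι] [DecidableEq ι] {x₀ : E}

theorem analyticAt_list_prod_map_apply {α : Type*} (L : List α) {M : E → α → Matrix ι ι 𝕜}
    (hM : ∀ a ∈ L, ∀ i j, AnalyticAt 𝕜 (fun x => M x a i j) x₀) (i j : ι) :
    AnalyticAt 𝕜 (fun x => (L.map (M x)).prod i j) x₀ := by
  induction L generalizing i j with
  | nil => simpa using analyticAt_const
  | cons a L ih =>
    simp only [List.map_cons, List.prod_cons, Matrix.mul_apply]
    exact Finset.analyticAt_fun_sum _ fun k _ =>
      (hM a (by simp) i k).mul (ih (fun b hb => hM b (by simp [hb])) k j)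

theorem HasFDerivAt.mulVec_of_eq_one_of_eq_zero {M : E → Matrix ι ι 𝕜} {v : E → ι → 𝕜}
    {v' : E →L[𝕜] ι → 𝕜} (hM : ∀ i j, DifferentiableAt 𝕜 (fun x => M x i j) x₀)
    (hv : HasFDerivAt v v' x₀) (hM₀ : M x₀ = 1) (hv₀ : v x₀ = 0) :
    HasFDerivAt (fun x => M x *ᵥ v x) v' x₀ := by
  refine hasFDerivAt_pi'.2 fun i => ?_
  have hsum : HasFDerivAt (fun x => (M x *ᵥ v x) i)
      (∑ j, (M x₀ i j • (ContinuousLinearMap.proj j).comp v'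
        + v x₀ j • fderiv 𝕜 (fun x => M x i j) x₀)) x₀ :=
    .fun_sum fun j _ => (hM i j).hasFDerivAt.mul (hasFDerivAt_pi'.1 hv j)
  have hz : ∀ c : E →L[𝕜] 𝕜, (0 : 𝕜) • c = 0 := fun c => zero_smul 𝕜 c
  simpa [hM₀, hv₀, Matrix.one_apply, hz] using hsum

theorem HasFDerivAt.vecMul_of_eq_one_of_eq_zero {M : E → Matrix ι ι 𝕜} {v : E → ι → 𝕜}
    {v' : E →L[𝕜] ι → 𝕜} (hM : ∀ i j, DifferentiableAt 𝕜 (fun x => M x i j) x₀)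
    (hv : HasFDerivAt v v' x₀) (hM₀ : M x₀ = 1) (hv₀ : v x₀ = 0) :
    HasFDerivAt (fun x => v x ᵥ* M x) v' x₀ := by
  refine hasFDerivAt_pi'.2 fun i => ?_
  have hsum : HasFDerivAt (fun x => (v x ᵥ* M x) i)
      (∑ j, (v x₀ j • fderiv 𝕜 (fun x => M x j i) x₀
        + M x₀ j i • (ContinuousLinearMap.proj j).comp v')) x₀ :=
    .fun_sum fun j _ => (hasFDerivAt_pi'.1 hv j).mul (hM j i).hasFDerivAt
  have hz : ∀ c : E →L[𝕜] 𝕜, (0 : 𝕜) • c = 0 := fun c => zero_smul 𝕜 c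
  simpa [hM₀, hv₀, Matrix.one_apply, hz] using hsum

end MatrixCalculus

section
variable {n d : ℕ}

theorem analyticAt_fst_apply (α : Fin d) (i : Fin n) (x : PSp n d) :
    AnalyticAt ℂ (fun x : PSp n d => (x α).1 i) x :=
  (ContinuousLinearMap.proj (R := ℂ) (φ := fun _ : Fin n => ℂ) i ∘L
    ContinuousLinearMap.fst ℂ _ _ ∘L ContinuousLinearMap.proj α : PSp n d →L[ℂ] ℂ).analyticAt x

theorem analyticAt_snd_apply (α : Fin d) (i : Fin n) (x : PSp n d) :
    AnalyticAt ℂ (fun x : PSp n d => (x α).2 i) x :=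
  (ContinuousLinearMap.proj (R := ℂ) (φ := fun _ : Fin n => ℂ) i ∘L
    ContinuousLinearMap.snd ℂ _ _ ∘L ContinuousLinearMap.proj α : PSp n d →L[ℂ] ℂ).analyticAt x

theorem analyticAt_Gfun (α : Fin d) (j : Fin (n + 1)) (x : PSp n d) :
    AnalyticAt ℂ (fun x => Gfun n d x α j) x := by
  refine analyticAt_const.add (Finset.analyticAt_fun_sum _ fun k _ => ?_)
  split_ifs
  · exact (analyticAt_fst_apply α k x).mul (analyticAt_snd_apply α k x)
  · exact analyticAt_const

theorem Gfun_zero (α : Fin d) (j : Fin (n + 1)) : Gfun n d 0 α j = 1 := by simp [Gfun]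

theorem sfun_zero (α : Fin d) (j : Fin (n + 1)) : sfun n d 0 α j = 1 := by simp [sfun, Gfun_zero]

theorem analyticAt_sfun_zero (α : Fin d) (j : Fin (n + 1)) :
    AnalyticAt ℂ (fun x => sfun n d x α j) 0 :=
  (analyticAt_Gfun α j 0).cpow analyticAt_const (by simp [Gfun_zero])

theorem analyticAt_gP_apply_zero (α : Fin d) (j k : Fin n) :
    AnalyticAt ℂ (fun x => gP n d x α j k) 0 := by
  simp only [gP, Matrix.of_apply]
  split_ifs
  · exact (analyticAt_sfun_zero α _).div (analyticAt_sfun_zero α _) (by simp [sfun_zero])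
  · exact ((analyticAt_fst_apply α j 0).mul (analyticAt_snd_apply α k 0)).div
      ((analyticAt_sfun_zero α _).mul (analyticAt_sfun_zero α _)) (by simp [sfun_zero])
  · exact analyticAt_const

theorem analyticAt_kM_apply_zero (α : Fin d) (j k : Fin n) :
    AnalyticAt ℂ (fun x => kM n d x α j k) 0 := by
  simp only [kM, Matrix.of_apply]
  split_ifs
  · exact (analyticAt_sfun_zero α _).div (analyticAt_sfun_zero α _) (by simp [sfun_zero])
  · exact ((analyticAt_fst_apply α j 0).mul (analyticAt_snd_apply α k 0)).div
      ((analyticAt_sfun_zero α _).mul (analyticAt_sfun_zero α _)) (by simp [sfun_zero])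
  · exact analyticAt_const

theorem gP_zero (α : Fin d) : gP n d 0 α = 1 := by
  ext j k
  simp [gP, sfun_zero, Matrix.one_apply]

theorem kM_zero (α : Fin d) : kM n d 0 α = 1 := by
  ext j k
  simp [kM, sfun_zero, Matrix.one_apply]

theorem hPl_zero (m : ℕ) : hPl n d 0 m = 1 :=
  List.prod_eq_one fun _ hM => by
    obtain ⟨α, -, rfl⟩ := List.mem_map.1 hM
    exact gP_zero α

theorem hMl_zero (m : ℕ) : hMl n d 0 m = 1 :=
  List.prod_eq_one fun _ hM => by
    obtain ⟨α, -, rfl⟩ := List.mem_map.1 (List.mem_reverse.1 hM)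
    exact kM_zero α

theorem analyticAt_hPl_apply_zero (m : ℕ) (i j : Fin n) :
    AnalyticAt ℂ (fun x => hPl n d x m i j) 0 :=
  analyticAt_list_prod_map_apply _ (fun α _ => analyticAt_gP_apply_zero α) i j

theorem analyticAt_hMl_apply_zero (m : ℕ) (i j : Fin n) :
    AnalyticAt ℂ (fun x => hMl n d x m i j) 0 := by
  simp only [hMl, ← List.map_reverse]
  exact analyticAt_list_prod_map_apply _ (fun α _ => analyticAt_kM_apply_zero α) i j

def stackEquiv (n d : ℕ) : PSp n d ≃L[ℂ] Snd n d :=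
  LinearEquiv.toContinuousLinearEquiv
    { toFun := fun x => (Matrix.of fun i α => (x α).1 i, Matrix.of fun α i => (x α).2 i)
      invFun := fun p α => (fun i => p.1 i α, p.2 α)
      map_add' := fun _ _ => rfl
      map_smul' := fun _ _ => rfl
      left_inv := fun _ => rfl
      right_inv := fun _ => rfl }

theorem mmap_zero : mmap n d 0 = 0 := by
  ext <;> simp [mmap]

theorem analyticAt_mmap_zero : AnalyticAt ℂ (mmap n d) 0 := by
  refine AnalyticAt.prod (AnalyticAt.pi fun i => AnalyticAt.pi fun α => ?_)
    (AnalyticAt.pi fun α => AnalyticAt.pi fun i => ?_)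
  · show AnalyticAt ℂ (fun x => ∑ j, hPl n d x α i j * (x α).1 j) 0
    exact Finset.analyticAt_fun_sum _ fun j _ =>
      (analyticAt_hPl_apply_zero α i j).fun_mul (analyticAt_fst_apply α j 0)
  · show AnalyticAt ℂ (fun x => ∑ j, (x α).2 j * hMl n d x α j i) 0
    exact Finset.analyticAt_fun_sum _ fun j _ =>
      (analyticAt_snd_apply α j 0).fun_mul (analyticAt_hMl_apply_zero α j i)

theorem hasFDerivAt_mmap_zero :
    HasFDerivAt (mmap n d) (stackEquiv n d : PSp n d →L[ℂ] Snd n d) 0 := by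
  have hA : ∀ α : Fin d, HasFDerivAt (fun x : PSp n d => hPl n d x α *ᵥ (x α).1)
      (ContinuousLinearMap.fst ℂ _ _ ∘L ContinuousLinearMap.proj α) 0 := fun α =>
    .mulVec_of_eq_one_of_eq_zero (fun i j => (analyticAt_hPl_apply_zero α i j).differentiableAt)
      (ContinuousLinearMap.fst ℂ _ _ ∘L ContinuousLinearMap.proj α : PSp n d →L[ℂ] _).hasFDerivAt
      (hPl_zero α) rfl
  have hB : ∀ α : Fin d, HasFDerivAt (fun x : PSp n d => (x α).2 ᵥ* hMl n d x α)
      (ContinuousLinearMap.snd ℂ _ _ ∘L ContinuousLinearMap.proj α) 0 := fun α =>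
    .vecMul_of_eq_one_of_eq_zero (fun i j => (analyticAt_hMl_apply_zero α i j).differentiableAt)
      (ContinuousLinearMap.snd ℂ _ _ ∘L ContinuousLinearMap.proj α : PSp n d →L[ℂ] _).hasFDerivAt
      (hMl_zero α) rfl
  have h1 : HasFDerivAt (fun x => (mmap n d x).1)
      (ContinuousLinearMap.fst ℂ _ _ ∘L (stackEquiv n d : PSp n d →L[ℂ] Snd n d)) 0 :=
    hasFDerivAt_pi'.2 fun i => hasFDerivAt_pi'.2 fun α => hasFDerivAt_pi'.1 (hA α) i
  have h2 : HasFDerivAt (fun x => (mmap n d x).2)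
      (ContinuousLinearMap.snd ℂ _ _ ∘L (stackEquiv n d : PSp n d →L[ℂ] Snd n d)) 0 :=
    hasFDerivAt_pi'.2 fun α => hasFDerivAt_pi'.2 fun i => hasFDerivAt_pi'.1 (hB α) i
  exact h1.prodMk h2

end

theorem statement3_general (n d : ℕ) :
    ∃ (U : Set (PSp n d)) (V : Set (Snd n d)) (g : Snd n d → PSp n d),
      IsOpen U ∧ IsOpen V ∧ (0 : PSp n d) ∈ U ∧ (0 : Snd n d) ∈ V ∧
      DifferentiableOn ℂ (mmap n d) U ∧ Set.BijOn (mmap n d) U V ∧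
      DifferentiableOn ℂ g V ∧
      (∀ x ∈ U, g (mmap n d x) = x) ∧ (∀ y ∈ V, mmap n d (g y) = y) := by
  obtain ⟨U, V, g, hU, hV, h0U, h0V, h⟩ :=
    (analyticAt_mmap_zero (n := n) (d := d)).contDiffAt.exists_bijOn_inverse hasFDerivAt_mmap_zero
  exact ⟨U, V, g, hU, hV, h0U, mmap_zero (n := n) (d := d) ▸ h0V, h⟩

/-- `m` restricts to a holomorphic bijection between open neighborhoods of the
origins, with holomorphic inverse. -/
theorem statement3 (n d : ℕ) (hn : 2 ≤ n) (hd : 2 ≤ d) :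
    ∃ (U : Set (PSp n d)) (V : Set (Snd n d)) (g : Snd n d → PSp n d),
      IsOpen U ∧ IsOpen V ∧ (0 : PSp n d) ∈ U ∧ (0 : Snd n d) ∈ V ∧
      DifferentiableOn ℂ (mmap n d) U ∧ Set.BijOn (mmap n d) U V ∧
      DifferentiableOn ℂ g V ∧
      (∀ x ∈ U, g (mmap n d x) = x) ∧ (∀ y ∈ V, mmap n d (g y) = y) :=
  statement3_general n d
end
end

section
/- Let n, d ≥ 1, κ ∈ ℂ∖{0}, let η^d := Σ_{i=1}^d E_{i,d+1−i} be the d×d antidiagonal permutation matrix, and let ξ_A, ξ_B ∈ ℂ with ξ_A ξ_B = −1/κ. Then the map ξ: S(n,d) → S(n,d), ξ(A,B) := (ξ_A A η^d, ξ_B η^d B), is a bijection, and for all differentiable functions F, H on S(n,d): {F∘ξ, H∘ξ}_κ = {F, H}^+_{−κ} ∘ ξ. That is, ξ is a Poisson diffeomorphism from (S(n,d), {·,·}_κ) to (S(n,d), {·,·}^+_{−κ}). -/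
open Matrix BigOperators

noncomputable section

attribute [local instance] Matrix.normedAddCommGroup Matrix.normedSpace

/-- `{𝒜_i^α, 𝒜_k^β}^+_κ` -/
def pAAplus (n d : ℕ) (κ : ℂ) (p : Snd n d) (i k : Fin n) (α β : Fin d) : ℂ :=
  -(κ / 2) * (csgn (((i : ℕ) : ℤ) - ((k : ℕ) : ℤ)) + csgn (((α : ℕ) : ℤ) - ((β : ℕ) : ℤ))) *
    p.1 k α * p.1 i β

/-- `{ℬ_i^α, ℬ_k^β}^+_κ` -/
def pBBplus (n d : ℕ) (κ : ℂ) (p : Snd n d) (i k : Fin n) (α β : Fin d) : ℂ :=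
  κ / 2 * (csgn (((i : ℕ) : ℤ) - ((k : ℕ) : ℤ)) + csgn (((α : ℕ) : ℤ) - ((β : ℕ) : ℤ))) *
    p.2 α k * p.2 β i

/-- `{𝒜_i^α, ℬ_k^β}^+_κ` -/
def pABplus (n d : ℕ) (κ : ℂ) (p : Snd n d) (i : Fin n) (α : Fin d) (k : Fin n) (β : Fin d) : ℂ :=
  -(κ / 2) * cdelta i k * p.1 i α * p.2 β k
    - κ * cdelta i k * ∑ s : Fin n, (if i < s then p.1 s α * p.2 β s else 0)
    - κ / 2 * cdelta α β * p.1 i α * p.2 β k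
    - κ * cdelta α β * ∑ μ : Fin d, (if α < μ then p.1 i μ * p.2 μ k else 0)
    - cdelta i k * cdelta α β

/-- The Arutyunov–Olivucci bivector bracket `{F,H}^+_κ` on `S(n,d)`. -/
def brP (n d : ℕ) (κ : ℂ) (F H : Snd n d → ℂ) (p : Snd n d) : ℂ :=
  ∑ i : Fin n, ∑ α : Fin d, ∑ k : Fin n, ∑ β : Fin d,
    (pAAplus n d κ p i k α β * fderiv ℂ F p (eA n d i α) * fderiv ℂ H p (eA n d k β)
      + pABplus n d κ p i α k β *
          (fderiv ℂ F p (eA n d i α) * fderiv ℂ H p (eB n d β k)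
            - fderiv ℂ H p (eA n d i α) * fderiv ℂ F p (eB n d β k))
      + pBBplus n d κ p i k α β * fderiv ℂ F p (eB n d α i) * fderiv ℂ H p (eB n d β k))

/-- The `ℓ×ℓ` antidiagonal permutation matrix `η^ℓ = Σ_{i=1}^ℓ E_{i,ℓ+1−i}`. -/
def etaM (ℓ : ℕ) : Matrix (Fin ℓ) (Fin ℓ) ℂ :=
  Matrix.of fun i j => if (i : ℕ) + (j : ℕ) + 1 = ℓ then 1 else 0

/-!
Right multiplication by `η^d` reverses the column index of `A`, left multiplication reverses the
row index of `B`; both are the colour reversal `α ↦ d + 1 - α`. Under it `sgn (α - β)` changes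
sign and the sums over `μ < α` become sums over `μ > α`, so the coordinate brackets of
`{·,·}_κ`, rescaled by `ξ_A²`, `ξ_B²` and `ξ_A ξ_B`, are those of `{·,·}^+_{-κ}` at the image
point; `ξ_A ξ_B κ = -1` matches the constant terms. Since `ξ` is linear, the chain rule carries
the bivector of `{·,·}_κ` to that of `{·,·}^+_{-κ}`, and `ξ` is invertible because
`ξ_A, ξ_B ≠ 0` and the reversal is an involution.
-/

open Finset

lemma etaM_eq_one_submatrix (d : ℕ) :
    etaM d = (1 : Matrix (Fin d) (Fin d) ℂ).submatrix Fin.revPerm id := by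
  ext i j
  have := i.isLt
  have := j.isLt
  simp only [etaM, of_apply, submatrix_apply, one_apply, Fin.revPerm_apply, id, Fin.ext_iff,
    Fin.val_rev]
  congr 1
  apply propext
  omega

lemma mul_etaM {m : Type*} {d : ℕ} (M : Matrix m (Fin d) ℂ) :
    M * etaM d = M.submatrix id Fin.rev := by
  rw [etaM_eq_one_submatrix, mul_submatrix_one]
  rfl

lemma etaM_mul {m : Type*} [Fintype m] {d : ℕ} (M : Matrix (Fin d) m ℂ) :
    etaM d * M = M.submatrix Fin.rev id := by
  ext α j
  simp [mul_apply, etaM_eq_one_submatrix, one_apply, eq_comm]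

lemma csgn_rev_sub_rev {d : ℕ} (α β : Fin d) :
    csgn ((α.rev : ℕ) - (β.rev : ℕ) : ℤ) = -csgn ((α : ℕ) - (β : ℕ) : ℤ) := by
  have hα := α.isLt
  have hβ := β.isLt
  rw [csgn, csgn, ← Int.cast_neg, ← Int.sign_neg]
  congr 3
  simp only [Fin.val_rev]
  omega

lemma cdelta_rev {d : ℕ} (α β : Fin d) : cdelta α.rev β.rev = cdelta α β := by
  simp [cdelta, Fin.rev_inj]

section Xi

variable {n d : ℕ}

def xi (a b : ℂ) : Snd n d →L[ℂ] Snd n d :=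
  LinearMap.toContinuousLinearMap
    { toFun := fun p => (a • (p.1 * etaM d), b • (etaM d * p.2))
      map_add' := fun p q => by simp [Matrix.add_mul, Matrix.mul_add]
      map_smul' := fun c p => by simp [smul_comm c] }

lemma xi_apply (a b : ℂ) (p : Snd n d) :
    xi a b p = (a • p.1.submatrix id Fin.rev, b • p.2.submatrix Fin.rev id) := by
  simp [xi, mul_etaM, etaM_mul]

lemma xi_apply_fst (a b : ℂ) (p : Snd n d) (i : Fin n) (α : Fin d) :
    (xi a b p).1 i α = a * p.1 i α.rev := by
  simp [xi_apply]

lemma xi_apply_snd (a b : ℂ) (p : Snd n d) (α : Fin d) (i : Fin n) :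
    (xi a b p).2 α i = b * p.2 α.rev i := by
  simp [xi_apply]

lemma xi_xi (a b a' b' : ℂ) (p : Snd n d) :
    xi a b (xi a' b' p) = ((a * a') • p.1, (b * b') • p.2) := by
  ext <;> simp [xi_apply, mul_assoc]

lemma xi_bijective {a b : ℂ} (ha : a ≠ 0) (hb : b ≠ 0) :
    Function.Bijective (xi a b : Snd n d → Snd n d) :=
  Function.bijective_iff_has_inverse.2 ⟨xi a⁻¹ b⁻¹,
    fun p => by simp [xi_xi, ha, hb],
    fun p => by simp [xi_xi, ha, hb]⟩

lemma xi_eA (a b : ℂ) (i : Fin n) (α : Fin d) : xi a b (eA n d i α) = a • eA n d i α.rev := by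
  ext <;> simp [xi_apply, eA, Matrix.single_apply, Fin.rev_eq_iff]

lemma xi_eB (a b : ℂ) (α : Fin d) (i : Fin n) : xi a b (eB n d α i) = b • eB n d α.rev i := by
  ext <;> simp [xi_apply, eB, Matrix.single_apply, Fin.rev_eq_iff]

variable {a b : ℂ} {F : Snd n d → ℂ} {p : Snd n d}

lemma fderiv_comp_xi_apply (hF : DifferentiableAt ℂ F (xi a b p)) (v : Snd n d) :
    fderiv ℂ (F ∘ xi a b) p v = fderiv ℂ F (xi a b p) (xi a b v) :=
  congrArg (· v) (hF.hasFDerivAt.comp p (xi a b).hasFDerivAt).fderiv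

lemma fderiv_comp_xi_eA (hF : DifferentiableAt ℂ F (xi a b p)) (i : Fin n) (α : Fin d) :
    fderiv ℂ (F ∘ xi a b) p (eA n d i α) = a * fderiv ℂ F (xi a b p) (eA n d i α.rev) := by
  rw [fderiv_comp_xi_apply hF, xi_eA, map_smul, smul_eq_mul]

lemma fderiv_comp_xi_eB (hF : DifferentiableAt ℂ F (xi a b p)) (α : Fin d) (i : Fin n) :
    fderiv ℂ (F ∘ xi a b) p (eB n d α i) = b * fderiv ℂ F (xi a b p) (eB n d α.rev i) := by
  rw [fderiv_comp_xi_apply hF, xi_eB, map_smul, smul_eq_mul]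

variable {κ : ℂ} {i k : Fin n} {α β : Fin d}

lemma pAAplus_xi :
    pAAplus n d (-κ) (xi a b p) i k α.rev β.rev = a ^ 2 * pAA n d κ p i k α β := by
  simp only [pAAplus, pAA, xi_apply_fst, csgn_rev_sub_rev, Fin.rev_rev]
  ring

lemma pBBplus_xi :
    pBBplus n d (-κ) (xi a b p) i k α.rev β.rev = b ^ 2 * pBB n d κ p i k α β := by
  simp only [pBBplus, pBB, xi_apply_snd, csgn_rev_sub_rev, Fin.rev_rev]
  ring

lemma pABplus_xi (habκ : a * b * κ = -1) :
    pABplus n d (-κ) (xi a b p) i α.rev k β.rev = a * b * pAB n d κ p i α k β := by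
  have hs : ∑ s : Fin n, (if i < s then (xi a b p).1 s α.rev * (xi a b p).2 β.rev s else 0)
      = a * b * ∑ s : Fin n, (if i < s then p.1 s α * p.2 β s else 0) := by
    rw [mul_sum]
    refine sum_congr rfl fun s _ => ?_
    simp only [xi_apply_fst, xi_apply_snd, Fin.rev_rev]
    split_ifs <;> ring
  have hμ : ∑ μ : Fin d, (if α.rev < μ then (xi a b p).1 i μ * (xi a b p).2 μ k else 0)
      = a * b * ∑ μ : Fin d, (if μ < α then p.1 i μ * p.2 μ k else 0) := by
    rw [← Equiv.sum_comp Fin.revPerm, mul_sum]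
    refine sum_congr rfl fun μ _ => ?_
    simp only [Fin.revPerm_apply, Fin.rev_lt_rev, xi_apply_fst, xi_apply_snd, Fin.rev_rev]
    split_ifs <;> ring
  rw [pABplus, pAB, hs, hμ]
  simp only [xi_apply_fst, xi_apply_snd, Fin.rev_rev, cdelta_rev]
  linear_combination (-(cdelta i k * cdelta α β)) * habκ

end Xi

theorem statement4_general (n d : ℕ) (κ : ℂ) (hκ : κ ≠ 0)
    (ξA ξB : ℂ) (hξ : ξA * ξB = -(1 / κ)) :
    Function.Bijective
        (fun p : Snd n d => ((ξA • (p.1 * etaM d), ξB • (etaM d * p.2)) : Snd n d)) ∧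
    ∀ F H : Snd n d → ℂ, Differentiable ℂ F → Differentiable ℂ H →
      ∀ p : Snd n d,
        brS n d κ (fun q => F (ξA • (q.1 * etaM d), ξB • (etaM d * q.2)))
            (fun q => H (ξA • (q.1 * etaM d), ξB • (etaM d * q.2))) p
          = brP n d (-κ) F H (ξA • (p.1 * etaM d), ξB • (etaM d * p.2)) := by
  have hξκ : ξA * ξB * κ = -1 := by
    rw [hξ]
    field_simp
  obtain ⟨hA, hB⟩ : ξA ≠ 0 ∧ ξB ≠ 0 :=
    mul_ne_zero_iff.1 (left_ne_zero_of_mul (hξκ ▸ neg_ne_zero.2 one_ne_zero))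
  refine ⟨xi_bijective hA hB, fun F H hF hH p => ?_⟩
  change brS n d κ (F ∘ xi ξA ξB) (H ∘ xi ξA ξB) p = brP n d (-κ) F H (xi ξA ξB p)
  rw [brS, brP]
  refine sum_congr rfl fun i _ => Fintype.sum_equiv Fin.revPerm _ _ fun α =>
    sum_congr rfl fun k _ => Fintype.sum_equiv Fin.revPerm _ _ fun β => ?_
  simp only [Fin.revPerm_apply, fderiv_comp_xi_eA (hF _), fderiv_comp_xi_eB (hF _),
    fderiv_comp_xi_eA (hH _), fderiv_comp_xi_eB (hH _), pAAplus_xi, pBBplus_xi, pABplus_xi hξκ]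
  ring

/-- `ξ(A,B) = (ξ_A A η^d, ξ_B η^d B)` with `ξ_A ξ_B = −1/κ` is a Poisson
diffeomorphism from `(S(n,d), {·,·}_κ)` to `(S(n,d), {·,·}^+_{−κ})`. -/
theorem statement4 (n d : ℕ) (hn : 1 ≤ n) (hd : 1 ≤ d) (κ : ℂ) (hκ : κ ≠ 0)
    (ξA ξB : ℂ) (hξ : ξA * ξB = -(1 / κ)) :
    Function.Bijective
        (fun p : Snd n d => ((ξA • (p.1 * etaM d), ξB • (etaM d * p.2)) : Snd n d)) ∧
    ∀ F H : Snd n d → ℂ, Differentiable ℂ F → Differentiable ℂ H →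
      ∀ p : Snd n d,
        brS n d κ (fun q => F (ξA • (q.1 * etaM d), ξB • (etaM d * q.2)))
            (fun q => H (ξA • (q.1 * etaM d), ξB • (etaM d * q.2))) p
          = brP n d (-κ) F H (ξA • (p.1 * etaM d), ξB • (etaM d * p.2)) :=
  statement4_general n d κ hκ ξA ξB hξ
end
end

section
/- Let n, d ≥ 1, κ ∈ ℂ∖{0}, and let η^ℓ := Σ_{i=1}^ℓ E_{i,ℓ+1−i} denote the ℓ×ℓ antidiagonal permutation matrix. Then the swap map ν: S(n,d) → S(d,n), ν(A,B) := (η^d B η^n, η^n A η^d), is a bijection, and for all differentiable functions F, H on S(d,n): {F∘ν, H∘ν}_κ = {F, H}_{−κ} ∘ ν. That is, ν is a Poisson diffeomorphism from (S(n,d), {·,·}_κ) to (S(d,n), {·,·}_{−κ}). -/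
open Matrix BigOperators

noncomputable section

attribute [local instance] Matrix.normedAddCommGroup Matrix.normedSpace

/-!
Conjugation by the antidiagonal matrices reverses row and column indices, so `ν` sends the
coordinate `A_i^α` to `B_{ī}^{ᾱ}` and `B_α^i` to `A_{ᾱ}^{ī}`, where `ī = n + 1 - i` (`Fin.rev`).
Reversal flips every `sgn(i - k)` and exchanges the conditions `s > i` and `μ < α`; together with
`κ ↦ -κ` this turns the `AA`-brackets into the `BB`-brackets and the `AB`-brackets into minus the
`BA`-brackets, i.e. `ν` pushes the bivector `π_κ` forward to `π_{-κ}`. Since `ν` is linear, the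
chain rule turns this into the identity of brackets.
-/

lemma Fin.sum_univ_rev {M : Type*} [AddCommMonoid M] {ℓ : ℕ} (f : Fin ℓ → M) :
    ∑ i : Fin ℓ, f i.rev = ∑ i, f i :=
  Equiv.sum_comp Fin.revPerm f

lemma sum_sum_sum_sum_rev {M : Type*} [AddCommMonoid M] {n d : ℕ}
    (f : Fin d → Fin n → Fin d → Fin n → M) :
    ∑ a, ∑ x, ∑ b, ∑ y, f a x b y
      = ∑ i : Fin n, ∑ α : Fin d, ∑ k : Fin n, ∑ β : Fin d, f α.rev i.rev β.rev k.rev := by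
  rw [Finset.sum_comm, ← Fin.sum_univ_rev]
  refine Finset.sum_congr rfl fun i _ => ?_
  rw [← Fin.sum_univ_rev]
  refine Finset.sum_congr rfl fun α _ => ?_
  rw [Finset.sum_comm, ← Fin.sum_univ_rev]
  refine Finset.sum_congr rfl fun k _ => ?_
  rw [← Fin.sum_univ_rev]

lemma sum_sum_sum_sum_swap {M ι ι' : Type*} [AddCommMonoid M] [Fintype ι] [Fintype ι']
    (g : ι → ι' → ι → ι' → M) :
    ∑ i, ∑ a, ∑ k, ∑ b, g i a k b = ∑ i, ∑ a, ∑ k, ∑ b, g k b i a := by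
  calc ∑ i, ∑ a, ∑ k, ∑ b, g i a k b = ∑ x : ι × ι', ∑ y : ι × ι', g x.1 x.2 y.1 y.2 := by
        simp only [Fintype.sum_prod_type]
    _ = ∑ y : ι × ι', ∑ x : ι × ι', g x.1 x.2 y.1 y.2 := Finset.sum_comm
    _ = ∑ i, ∑ a, ∑ k, ∑ b, g k b i a := by simp only [Fintype.sum_prod_type]

lemma csgn_rev_sub_rev_s5 {ℓ : ℕ} (i k : Fin ℓ) :
    csgn ((i.rev : ℕ) - (k.rev : ℕ) : ℤ) = -csgn ((i : ℕ) - (k : ℕ) : ℤ) := by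
  have h : ((i.rev : ℕ) - (k.rev : ℕ) : ℤ) = -((i : ℕ) - (k : ℕ) : ℤ) := by
    simp only [Fin.val_rev]
    omega
  rw [h, csgn, csgn, Int.sign_neg, Int.cast_neg]

lemma cdelta_rev_s5 {ℓ : ℕ} (i k : Fin ℓ) : cdelta i.rev k.rev = cdelta i k := by
  simp [cdelta]

lemma etaM_apply {ℓ : ℕ} (i j : Fin ℓ) : etaM ℓ i j = if i.rev = j then 1 else 0 := by
  simp only [etaM, of_apply, Fin.ext_iff, Fin.val_rev]
  congr 1
  exact propext (by omega)

lemma etaM_mul_apply {ℓ : ℕ} {m : Type*} (M : Matrix (Fin ℓ) m ℂ) (i : Fin ℓ) (x : m) :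
    (etaM ℓ * M) i x = M i.rev x := by
  simp [mul_apply, etaM_apply]

lemma mul_etaM_apply {ℓ : ℕ} {m : Type*} (M : Matrix m (Fin ℓ) ℂ) (x : m)
    (j : Fin ℓ) : (M * etaM ℓ) x j = M x j.rev := by
  simp [mul_apply, etaM_apply, Fin.rev_eq_iff]

lemma etaM_mul_mul_etaM_apply {ℓ₁ ℓ₂ : ℕ} (M : Matrix (Fin ℓ₁) (Fin ℓ₂) ℂ) (i : Fin ℓ₁)
    (j : Fin ℓ₂) : (etaM ℓ₁ * M * etaM ℓ₂) i j = M i.rev j.rev := by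
  rw [mul_etaM_apply, etaM_mul_apply]

lemma etaM_mul_single_mul_etaM {ℓ₁ ℓ₂ : ℕ} (i : Fin ℓ₁) (j : Fin ℓ₂) :
    etaM ℓ₁ * single i j (1 : ℂ) * etaM ℓ₂ = single i.rev j.rev 1 := by
  ext a b
  simp only [etaM_mul_mul_etaM_apply, single_apply, Fin.rev_eq_iff]

namespace Snd

variable (n d : ℕ)

def swap : Snd n d ≃L[ℂ] Snd d n :=
  LinearEquiv.toContinuousLinearEquiv
    { toFun := fun p => (etaM d * p.2 * etaM n, etaM n * p.1 * etaM d)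
      invFun := fun q => (etaM n * q.2 * etaM d, etaM d * q.1 * etaM n)
      map_add' := fun p q => by simp [Matrix.mul_add, Matrix.add_mul]
      map_smul' := fun c p => by simp [Matrix.mul_smul, Matrix.smul_mul]
      left_inv := fun p => by ext <;> simp [etaM_mul_mul_etaM_apply]
      right_inv := fun q => by ext <;> simp [etaM_mul_mul_etaM_apply] }

def bivector (κ : ℂ) (p : Snd n d) (f h : Snd n d →L[ℂ] ℂ) : ℂ :=
  ∑ i : Fin n, ∑ α : Fin d, ∑ k : Fin n, ∑ β : Fin d,
    (pAA n d κ p i k α β * f (eA n d i α) * h (eA n d k β)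
      + pAB n d κ p i α k β * (f (eA n d i α) * h (eB n d β k) - h (eA n d i α) * f (eB n d β k))
      + pBB n d κ p i k α β * f (eB n d α i) * h (eB n d β k))

variable {n d}

lemma swap_apply (p : Snd n d) :
    swap n d p = (etaM d * p.2 * etaM n, etaM n * p.1 * etaM d) := rfl

lemma swap_eA (i : Fin n) (α : Fin d) : swap n d (eA n d i α) = eB d n i.rev α.rev := by
  simp [swap_apply, eA, eB, etaM_mul_single_mul_etaM]

lemma swap_eB (α : Fin d) (i : Fin n) : swap n d (eB n d α i) = eA d n α.rev i.rev := by
  simp [swap_apply, eA, eB, etaM_mul_single_mul_etaM]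

lemma pAA_eq_pBB_swap (κ : ℂ) (p : Snd n d) (i k : Fin n) (α β : Fin d) :
    pAA n d κ p i k α β = pBB d n (-κ) (swap n d p) α.rev β.rev i.rev k.rev := by
  simp only [pAA, pBB, swap_apply, csgn_rev_sub_rev_s5, etaM_mul_mul_etaM_apply, Fin.rev_rev]
  ring

lemma pBB_eq_pAA_swap (κ : ℂ) (p : Snd n d) (i k : Fin n) (α β : Fin d) :
    pBB n d κ p i k α β = pAA d n (-κ) (swap n d p) α.rev β.rev i.rev k.rev := by
  simp only [pAA, pBB, swap_apply, csgn_rev_sub_rev_s5, etaM_mul_mul_etaM_apply, Fin.rev_rev]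
  ring

lemma pAB_eq_neg_pAB_swap (κ : ℂ) (p : Snd n d) (i k : Fin n) (α β : Fin d) :
    pAB n d κ p i α k β = -pAB d n (-κ) (swap n d p) β.rev k.rev α.rev i.rev := by
  have hn : ∑ s : Fin n, (if s < k.rev then p.2 β s.rev * p.1 s.rev α else 0)
      = ∑ s, if k < s then p.1 s α * p.2 β s else 0 := by
    rw [← Fin.sum_univ_rev]
    simp only [Fin.rev_rev, Fin.rev_lt_rev, mul_comm]
  have hd : ∑ μ : Fin d, (if β.rev < μ then p.2 μ.rev k * p.1 i μ.rev else 0)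
      = ∑ μ, if μ < β then p.1 i μ * p.2 μ k else 0 := by
    rw [← Fin.sum_univ_rev]
    simp only [Fin.rev_rev, Fin.rev_lt_rev, mul_comm]
  simp only [pAB, swap_apply, etaM_mul_mul_etaM_apply, Fin.rev_rev, cdelta_rev_s5, hn, hd]
  rcases eq_or_ne i k with rfl | hik <;> rcases eq_or_ne α β with rfl | hαβ <;>
    simp [cdelta, *, Ne.symm] <;> ring

lemma brS_eq_bivector (κ : ℂ) (F H : Snd n d → ℂ) (p : Snd n d) :
    brS n d κ F H p = bivector n d κ p (fderiv ℂ F p) (fderiv ℂ H p) := rfl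

lemma bivector_comp_swap (κ : ℂ) (p : Snd n d) (f h : Snd d n →L[ℂ] ℂ) :
    bivector n d κ p (f.comp (swap n d : Snd n d →L[ℂ] Snd d n))
        (h.comp (swap n d : Snd n d →L[ℂ] Snd d n))
      = bivector d n (-κ) (swap n d p) f h := by
  rw [bivector, bivector]
  conv_rhs => rw [sum_sum_sum_sum_rev]
  simp only [ContinuousLinearMap.comp_apply, ContinuousLinearEquiv.coe_coe, swap_eA, swap_eB,
    pAA_eq_pBB_swap κ p, pBB_eq_pAA_swap κ p, pAB_eq_neg_pAB_swap κ p,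
    Finset.sum_add_distrib]
  conv_lhs => enter [1, 2]; rw [sum_sum_sum_sum_swap]
  simp only [← Finset.sum_add_distrib]
  refine Finset.sum_congr rfl fun i _ => Finset.sum_congr rfl fun α _ =>
    Finset.sum_congr rfl fun k _ => Finset.sum_congr rfl fun β _ => ?_
  ring

lemma brS_comp_swap (κ : ℂ) (F H : Snd d n → ℂ) (p : Snd n d) :
    brS n d κ (F ∘ swap n d) (H ∘ swap n d) p = brS d n (-κ) F H (swap n d p) := by
  rw [brS_eq_bivector, brS_eq_bivector, ← bivector_comp_swap]
  congr 1 <;> exact (swap n d).comp_right_fderiv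

end Snd

theorem statement5_general (n d : ℕ) (κ : ℂ) :
    Function.Bijective
        (fun p : Snd n d => ((etaM d * p.2 * etaM n, etaM n * p.1 * etaM d) : Snd d n)) ∧
    ∀ F H : Snd d n → ℂ, Differentiable ℂ F → Differentiable ℂ H →
      ∀ p : Snd n d,
        brS n d κ (fun q => F (etaM d * q.2 * etaM n, etaM n * q.1 * etaM d))
            (fun q => H (etaM d * q.2 * etaM n, etaM n * q.1 * etaM d)) p
          = brS d n (-κ) F H (etaM d * p.2 * etaM n, etaM n * p.1 * etaM d) :=
  ⟨(Snd.swap n d).bijective, fun F H _ _ p => Snd.brS_comp_swap κ F H p⟩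

/-- the swap map `ν(A,B) = (η^d B η^n, η^n A η^d)` is a Poisson diffeomorphism
from `(S(n,d), {·,·}_κ)` to `(S(d,n), {·,·}_{−κ})`. -/
theorem statement5 (n d : ℕ) (hn : 1 ≤ n) (hd : 1 ≤ d) (κ : ℂ) (hκ : κ ≠ 0) :
    Function.Bijective
        (fun p : Snd n d => ((etaM d * p.2 * etaM n, etaM n * p.1 * etaM d) : Snd d n)) ∧
    ∀ F H : Snd d n → ℂ, Differentiable ℂ F → Differentiable ℂ H →
      ∀ p : Snd n d,
        brS n d κ (fun q => F (etaM d * q.2 * etaM n, etaM n * q.1 * etaM d))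
            (fun q => H (etaM d * q.2 * etaM n, etaM n * q.1 * etaM d)) p
          = brS d n (-κ) F H (etaM d * p.2 * etaM n, etaM n * p.1 * etaM d) :=
  statement5_general n d κ
end
end

section
/- Let n ≥ 2, d ≥ 1, κ ∈ ℂ∖{0}, let U ⊆ S(n,d) be open, and let φ₊, φ₋: U → GL(n,ℂ) be differentiable maps satisfying, for all points of U and all indices (componentwise): {A_{iα}, (φ_±)_{kl}}_κ = −κ Σ_{j,q} (r_∓^n)_{(ik),(jq)} A_{jα} (φ_±)_{ql} and {B_{αi}, (φ_±)_{kl}}_κ = κ Σ_{m,q} B_{αm} (r_∓^n)_{(mk),(iq)} (φ_±)_{ql} (in tensor notation: {A₁, (φ_±)₂}_κ = −κ r_∓^n A₁ (φ_±)₂ and {B₁, (φ_±)₂}_κ = κ B₁ r_∓^n (φ_±)₂). Then φ := φ₊ φ₋⁻¹ satisfies, in the same notation, {A₁, φ₂}_κ = κ (φ₂ r₊^n − r₋^n φ₂) A₁ and {B₁, φ₂}_κ = κ B₁ (r₋^n φ₂ − φ₂ r₊^n) on U. -/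
open Matrix BigOperators

noncomputable section

attribute [local instance] Matrix.normedAddCommGroup Matrix.normedSpace

/-- The entry `(r^n)_{(ik),(jl)}` of `r^n = (1/2) Σ_{p<q} (E_{pq}⊗E_{qp} − E_{qp}⊗E_{pq})`,
i.e. the coefficient of `E_{ij}⊗E_{kl}`. -/
def rnE (n : ℕ) (i k j l : Fin n) : ℂ :=
  (1 / 2) * ∑ p : Fin n, ∑ q : Fin n,
    (if p < q then
      (if i = p ∧ j = q then (1 : ℂ) else 0) * (if k = q ∧ l = p then 1 else 0)
        - (if i = q ∧ j = p then (1 : ℂ) else 0) * (if k = p ∧ l = q then 1 else 0)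
      else 0)

/-- The entry `(I^n)_{(ik),(jl)}` of `I^n = Σ_{p,q} E_{pq}⊗E_{qp}`. -/
def InE (n : ℕ) (i k j l : Fin n) : ℂ :=
  ∑ p : Fin n, ∑ q : Fin n,
    (if i = p ∧ j = q then (1 : ℂ) else 0) * (if k = q ∧ l = p then 1 else 0)

/-- entries of `r_+^n = r^n + (1/2) I^n`. -/
def rPE (n : ℕ) (i k j l : Fin n) : ℂ := rnE n i k j l + (1 / 2) * InE n i k j l

/-- entries of `r_-^n = r^n - (1/2) I^n`. -/
def rME (n : ℕ) (i k j l : Fin n) : ℂ := rnE n i k j l - (1 / 2) * InE n i k j l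

/-- entries of `M ⊗ 1ₙ`. -/
def one1 (n : ℕ) (M : Matrix (Fin n) (Fin n) ℂ) (i k j l : Fin n) : ℂ :=
  if k = l then M i j else 0

/-- entries of `1ₙ ⊗ M`. -/
def one2 (n : ℕ) (M : Matrix (Fin n) (Fin n) ℂ) (i k j l : Fin n) : ℂ :=
  if i = j then M k l else 0

/-- product of elements of `Mat_n(ℂ) ⊗ Mat_n(ℂ)` in entry form. -/
def tmul (n : ℕ) (S T : Fin n → Fin n → Fin n → Fin n → ℂ) (i k j l : Fin n) : ℂ :=
  ∑ p : Fin n, ∑ q : Fin n, S i k p q * T p q j l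


/-! The bracket `{F, ·}_κ` at a point only sees the differential of its second argument, so it is a
derivation there. Hence `φ ↦ {F, φ}` obeys the product rule on matrix-valued functions, and
`{F, φ₋⁻¹} = -φ₋⁻¹ {F, φ₋} φ₋⁻¹`. For `φ = φ₊ φ₋⁻¹` this gives
`{F, φ} = {F, φ₊} φ₋⁻¹ - φ {F, φ₋} φ₋⁻¹`. Inserting the relations for `φ₊` and `φ₋`, the factors
`φ₋ φ₋⁻¹` cancel and `φ` is left multiplied by `r₊` on one side and by `r₋` on the other. -/

section Derivation

variable {n d : ℕ} (κ : ℂ) (F : Snd n d → ℂ) (p : Snd n d)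

def brSLinear : (Snd n d →L[ℂ] ℂ) →ₗ[ℂ] ℂ where
  toFun L := ∑ i : Fin n, ∑ α : Fin d, ∑ k : Fin n, ∑ β : Fin d,
    (pAA n d κ p i k α β * fderiv ℂ F p (eA n d i α) * L (eA n d k β)
      + pAB n d κ p i α k β *
          (fderiv ℂ F p (eA n d i α) * L (eB n d β k) - L (eA n d i α) * fderiv ℂ F p (eB n d β k))
      + pBB n d κ p i k α β * fderiv ℂ F p (eB n d α i) * L (eB n d β k))
  map_add' L L' := by
    simp only [_root_.add_apply, ← Finset.sum_add_distrib]
    exact Finset.sum_congr rfl fun _ _ => Finset.sum_congr rfl fun _ _ =>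
      Finset.sum_congr rfl fun _ _ => Finset.sum_congr rfl fun _ _ => by ring
  map_smul' c L := by
    simp only [FunLike.coe_smul, Pi.smul_apply, smul_eq_mul, RingHom.id_apply,
      Finset.mul_sum]
    exact Finset.sum_congr rfl fun _ _ => Finset.sum_congr rfl fun _ _ =>
      Finset.sum_congr rfl fun _ _ => Finset.sum_congr rfl fun _ _ => by ring

theorem brS_eq_brSLinear (H : Snd n d → ℂ) :
    brS n d κ F H p = brSLinear κ F p (fderiv ℂ H p) := rfl

variable {κ F p}

theorem brS_congr {H H' : Snd n d → ℂ} (h : H =ᶠ[nhds p] H') :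
    brS n d κ F H p = brS n d κ F H' p := by
  rw [brS_eq_brSLinear, brS_eq_brSLinear, h.fderiv_eq]

theorem brS_const (c : ℂ) : brS n d κ F (fun _ => c) p = 0 := by
  rw [brS_eq_brSLinear, fderiv_const_apply, map_zero]

theorem brS_mul {H₁ H₂ : Snd n d → ℂ} (h₁ : DifferentiableAt ℂ H₁ p)
    (h₂ : DifferentiableAt ℂ H₂ p) :
    brS n d κ F (fun q => H₁ q * H₂ q) p
      = brS n d κ F H₁ p * H₂ p + H₁ p * brS n d κ F H₂ p := by
  have hd : fderiv ℂ (fun q => H₁ q * H₂ q) p = H₁ p • fderiv ℂ H₂ p + H₂ p • fderiv ℂ H₁ p :=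
    fderiv_fun_mul h₁ h₂
  simp only [brS_eq_brSLinear, hd, map_add, map_smul, smul_eq_mul]
  ring

theorem brS_sum {ι : Type*} (s : Finset ι) {H : ι → Snd n d → ℂ}
    (h : ∀ i ∈ s, DifferentiableAt ℂ (H i) p) :
    brS n d κ F (fun q => ∑ i ∈ s, H i q) p = ∑ i ∈ s, brS n d κ F (H i) p := by
  have hd : fderiv ℂ (fun q => ∑ i ∈ s, H i q) p = ∑ i ∈ s, fderiv ℂ (H i) p := fderiv_fun_sum h
  simp only [brS_eq_brSLinear, hd, map_sum]

end Derivation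

section MatrixEntries

variable {𝕜 E ι : Type*} [NontriviallyNormedField 𝕜] [NormedAddCommGroup E] [NormedSpace 𝕜 E]
  [Fintype ι] [DecidableEq ι] {M : E → Matrix ι ι 𝕜} {x : E}

theorem differentiableAt_det (hM : ∀ a b, DifferentiableAt 𝕜 (fun y => M y a b) x) :
    DifferentiableAt 𝕜 (fun y => (M y).det) x := by
  simp only [Matrix.det_apply']
  exact DifferentiableAt.fun_sum fun σ _ => DifferentiableAt.const_mul
    (HasFDerivAt.finsetProd fun i _ => (hM (σ i) i).hasFDerivAt).differentiableAt _

theorem differentiableAt_inv_apply (hM : ∀ a b, DifferentiableAt 𝕜 (fun y => M y a b) x)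
    (hdet : IsUnit (M x).det) (a b : ι) :
    DifferentiableAt 𝕜 (fun y => (M y)⁻¹ a b) x := by
  have hadj : DifferentiableAt 𝕜 (fun y => (M y).adjugate a b) x := by
    simp only [Matrix.adjugate_apply]
    refine differentiableAt_det fun c e => ?_
    by_cases hc : c = b
    · simp only [Matrix.updateRow_apply, hc, if_true]
      exact differentiableAt_const _
    · simp only [Matrix.updateRow_apply, hc, if_false]
      exact hM c e
  simp only [Matrix.inv_def, Matrix.smul_apply, Ring.inverse_eq_inv', smul_eq_mul]
  exact ((differentiableAt_det hM).inv hdet.ne_zero).mul hadj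

end MatrixEntries

section BracketMatrix

variable {n d : ℕ} {ι : Type*}

def bracketMat (κ : ℂ) (F : Snd n d → ℂ) (M : Snd n d → Matrix ι ι ℂ) (p : Snd n d) :
    Matrix ι ι ℂ :=
  Matrix.of fun k l => brS n d κ F (fun q => M q k l) p

variable {κ : ℂ} {F : Snd n d → ℂ} {p : Snd n d} {M N : Snd n d → Matrix ι ι ℂ}

theorem bracketMat_eq_zero_of_eventuallyEq_const {C : Matrix ι ι ℂ}
    (h : M =ᶠ[nhds p] fun _ => C) : bracketMat κ F M p = 0 := by
  ext k l
  rw [bracketMat, Matrix.of_apply, brS_congr (h.mono fun q hq => congrFun₂ hq k l), brS_const,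
    Matrix.zero_apply]

variable [Fintype ι]

theorem bracketMat_mul (hM : ∀ a b, DifferentiableAt ℂ (fun q => M q a b) p)
    (hN : ∀ a b, DifferentiableAt ℂ (fun q => N q a b) p) :
    bracketMat κ F (fun q => M q * N q) p
      = bracketMat κ F M p * N p + M p * bracketMat κ F N p := by
  ext k l
  simp only [bracketMat, Matrix.of_apply, Matrix.mul_apply, Matrix.add_apply,
    ← Finset.sum_add_distrib]
  rw [brS_sum (H := fun c q => M q k c * N q c l) Finset.univ
    fun c _ => (hM k c).fun_mul (hN c l)]
  exact Finset.sum_congr rfl fun c _ => brS_mul (hM k c) (hN c l)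

variable [DecidableEq ι]

theorem bracketMat_inv (hM : ∀ a b, DifferentiableAt ℂ (fun q => M q a b) p)
    (hunit : ∀ᶠ q in nhds p, IsUnit (M q).det) :
    bracketMat κ F (fun q => (M q)⁻¹) p = -((M p)⁻¹ * bracketMat κ F M p * (M p)⁻¹) := by
  have hinv := differentiableAt_inv_apply hM hunit.self_of_nhds
  have hzero : bracketMat κ F M p * (M p)⁻¹ + M p * bracketMat κ F (fun q => (M q)⁻¹) p = 0 := by
    rw [← bracketMat_mul hM hinv]
    exact bracketMat_eq_zero_of_eventuallyEq_const (hunit.mono fun q hq => mul_nonsing_inv _ hq)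
  calc bracketMat κ F (fun q => (M q)⁻¹) p
      = (M p)⁻¹ * (M p * bracketMat κ F (fun q => (M q)⁻¹) p) :=
        (nonsing_inv_mul_cancel_left _ _ hunit.self_of_nhds).symm
    _ = -((M p)⁻¹ * bracketMat κ F M p * (M p)⁻¹) := by
        rw [eq_neg_of_add_eq_zero_right hzero, Matrix.mul_neg, Matrix.mul_assoc]

theorem bracketMat_mul_inv (hM : ∀ a b, DifferentiableAt ℂ (fun q => M q a b) p)
    (hN : ∀ a b, DifferentiableAt ℂ (fun q => N q a b) p)
    (hunit : ∀ᶠ q in nhds p, IsUnit (N q).det) :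
    bracketMat κ F (fun q => M q * (N q)⁻¹) p
      = bracketMat κ F M p * (N p)⁻¹ - M p * (N p)⁻¹ * bracketMat κ F N p * (N p)⁻¹ := by
  rw [bracketMat_mul hM (differentiableAt_inv_apply hN hunit.self_of_nhds),
    bracketMat_inv hN hunit]
  simp only [Matrix.mul_neg, Matrix.mul_assoc, sub_eq_add_neg]

end BracketMatrix

theorem sum_smul_mul_nonsing_inv_sub {R ι ι' : Type*} [CommRing R] [Fintype ι] [DecidableEq ι]
    [Fintype ι'] (c : ι' → R) (S T : ι' → Matrix ι ι R) (P Q : Matrix ι ι R)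
    (hQ : IsUnit Q.det) :
    (∑ j, c j • (S j * P)) * Q⁻¹ - P * Q⁻¹ * (∑ j, c j • (T j * Q)) * Q⁻¹
      = ∑ j, c j • (S j * (P * Q⁻¹) - P * Q⁻¹ * T j) := by
  simp only [Finset.sum_mul, Finset.mul_sum, Matrix.smul_mul, Matrix.mul_smul, smul_sub,
    Finset.sum_sub_distrib, Matrix.mul_assoc, mul_nonsing_inv_cancel_right _ _ hQ]

section Tensor

variable {n : ℕ}

/-- The block of `T ∈ Mat_n ⊗ Mat_n` along `E_{ij}` in the first factor: `(tensorBlock T i j) k l`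
is the coefficient `T_{(ik),(jl)}` of `E_{ij} ⊗ E_{kl}`. -/
def tensorBlock (T : Fin n → Fin n → Fin n → Fin n → ℂ) (i j : Fin n) : Matrix (Fin n) (Fin n) ℂ :=
  Matrix.of fun k l => T i k j l

theorem tmul_one2_left (M : Matrix (Fin n) (Fin n) ℂ) (T : Fin n → Fin n → Fin n → Fin n → ℂ)
    (i k j l : Fin n) : tmul n (one2 n M) T i k j l = (M * tensorBlock T i j) k l := by
  simp [tmul, one2, tensorBlock, Matrix.mul_apply]

theorem tmul_one2_right (M : Matrix (Fin n) (Fin n) ℂ) (T : Fin n → Fin n → Fin n → Fin n → ℂ)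
    (i k j l : Fin n) : tmul n T (one2 n M) i k j l = (tensorBlock T i j * M) k l := by
  simp only [tmul, one2, tensorBlock, Matrix.mul_apply, Matrix.of_apply]
  rw [Finset.sum_comm]
  simp

theorem eq_sum_smul_tensorBlock_mul_of_apply_left {X M : Matrix (Fin n) (Fin n) ℂ}
    {T : Fin n → Fin n → Fin n → Fin n → ℂ} {c : ℂ} {x : Fin n → ℂ} {i : Fin n}
    (h : ∀ k l, X k l = c * ∑ j, ∑ q, T i k j q * x j * M q l) :
    X = ∑ j, (c * x j) • (tensorBlock T i j * M) := by
  ext k l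
  simp only [h, Matrix.sum_apply, Matrix.smul_apply, Matrix.mul_apply, tensorBlock,
    Matrix.of_apply, smul_eq_mul, Finset.mul_sum]
  exact Finset.sum_congr rfl fun j _ => Finset.sum_congr rfl fun q _ => by ring

theorem eq_sum_smul_tensorBlock_mul_of_apply_right {X M : Matrix (Fin n) (Fin n) ℂ}
    {T : Fin n → Fin n → Fin n → Fin n → ℂ} {c : ℂ} {x : Fin n → ℂ} {i : Fin n}
    (h : ∀ k l, X k l = c * ∑ m, ∑ q, x m * T m k i q * M q l) :
    X = ∑ m, (c * x m) • (tensorBlock T m i * M) := by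
  ext k l
  simp only [h, Matrix.sum_apply, Matrix.smul_apply, Matrix.mul_apply, tensorBlock,
    Matrix.of_apply, smul_eq_mul, Finset.mul_sum]
  exact Finset.sum_congr rfl fun m _ => Finset.sum_congr rfl fun q _ => by ring

end Tensor

theorem statement9_general (n d : ℕ) (κ : ℂ)
    (U : Set (Snd n d)) (hU : IsOpen U)
    (φp φm : Snd n d → Matrix (Fin n) (Fin n) ℂ)
    (hφpd : ∀ k l, DifferentiableOn ℂ (fun q => φp q k l) U)
    (hφmd : ∀ k l, DifferentiableOn ℂ (fun q => φm q k l) U)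
    (hφmu : ∀ p ∈ U, IsUnit (φm p).det)
    (hAp : ∀ p ∈ U, ∀ (i : Fin n) (α : Fin d) (k l : Fin n),
      brS n d κ (fun q => q.1 i α) (fun q => φp q k l) p
        = -κ * ∑ j : Fin n, ∑ q' : Fin n, rME n i k j q' * p.1 j α * φp p q' l)
    (hAm : ∀ p ∈ U, ∀ (i : Fin n) (α : Fin d) (k l : Fin n),
      brS n d κ (fun q => q.1 i α) (fun q => φm q k l) p
        = -κ * ∑ j : Fin n, ∑ q' : Fin n, rPE n i k j q' * p.1 j α * φm p q' l)
    (hBp : ∀ p ∈ U, ∀ (α : Fin d) (i : Fin n) (k l : Fin n),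
      brS n d κ (fun q => q.2 α i) (fun q => φp q k l) p
        = κ * ∑ m : Fin n, ∑ q' : Fin n, p.2 α m * rME n m k i q' * φp p q' l)
    (hBm : ∀ p ∈ U, ∀ (α : Fin d) (i : Fin n) (k l : Fin n),
      brS n d κ (fun q => q.2 α i) (fun q => φm q k l) p
        = κ * ∑ m : Fin n, ∑ q' : Fin n, p.2 α m * rPE n m k i q' * φm p q' l) :
    (∀ p ∈ U, ∀ (i : Fin n) (α : Fin d) (k l : Fin n),
      brS n d κ (fun q => q.1 i α) (fun q => (φp q * (φm q)⁻¹) k l) p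
        = κ * ∑ j : Fin n,
            (tmul n (one2 n (φp p * (φm p)⁻¹)) (rPE n) i k j l
              - tmul n (rME n) (one2 n (φp p * (φm p)⁻¹)) i k j l) * p.1 j α) ∧
    (∀ p ∈ U, ∀ (α : Fin d) (i : Fin n) (k l : Fin n),
      brS n d κ (fun q => q.2 α i) (fun q => (φp q * (φm q)⁻¹) k l) p
        = κ * ∑ m : Fin n, p.2 α m *
            (tmul n (rME n) (one2 n (φp p * (φm p)⁻¹)) m k i l
              - tmul n (one2 n (φp p * (φm p)⁻¹)) (rPE n) m k i l)) := by
  have quotient : ∀ p ∈ U, ∀ (F : Snd n d → ℂ) (c : Fin n → ℂ)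
      (S T : Fin n → Matrix (Fin n) (Fin n) ℂ),
      bracketMat κ F φp p = ∑ j, c j • (S j * φp p) →
      bracketMat κ F φm p = ∑ j, c j • (T j * φm p) →
      bracketMat κ F (fun q => φp q * (φm q)⁻¹) p
        = ∑ j, c j • (S j * (φp p * (φm p)⁻¹) - φp p * (φm p)⁻¹ * T j) := by
    intro p hp F c S T hP hM
    have hpU := hU.mem_nhds hp
    rw [bracketMat_mul_inv (fun a b => (hφpd a b).differentiableAt hpU)
      (fun a b => (hφmd a b).differentiableAt hpU) (Filter.eventually_of_mem hpU hφmu), hP, hM,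
      sum_smul_mul_nonsing_inv_sub _ _ _ _ _ (hφmu p hp)]
  refine ⟨fun p hp i α k l => ?_, fun p hp α i k l => ?_⟩
  · refine (congrFun₂ (quotient p hp _ _ _ _
      (eq_sum_smul_tensorBlock_mul_of_apply_left (hAp p hp i α))
      (eq_sum_smul_tensorBlock_mul_of_apply_left (hAm p hp i α))) k l).trans ?_
    simp only [tmul_one2_left, tmul_one2_right, Matrix.sum_apply, Matrix.smul_apply,
      Matrix.sub_apply, smul_eq_mul, Finset.mul_sum]
    exact Finset.sum_congr rfl fun j _ => by ring
  · refine (congrFun₂ (quotient p hp _ _ _ _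
      (eq_sum_smul_tensorBlock_mul_of_apply_right (hBp p hp α i))
      (eq_sum_smul_tensorBlock_mul_of_apply_right (hBm p hp α i))) k l).trans ?_
    simp only [tmul_one2_left, tmul_one2_right, Matrix.sum_apply, Matrix.smul_apply,
      Matrix.sub_apply, smul_eq_mul, Finset.mul_sum]
    exact Finset.sum_congr rfl fun m _ => by ring

/-- if `(φ₊,φ₋)` satisfies the componentwise moment-map relations, then
`φ = φ₊φ₋⁻¹` satisfies `{A₁,φ₂}_κ = κ(φ₂r₊ − r₋φ₂)A₁` and `{B₁,φ₂}_κ = κB₁(r₋φ₂ − φ₂r₊)`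
on `U`. -/
theorem statement9 (n d : ℕ) (hn : 2 ≤ n) (hd : 1 ≤ d) (κ : ℂ) (hκ : κ ≠ 0)
    (U : Set (Snd n d)) (hU : IsOpen U)
    (φp φm : Snd n d → Matrix (Fin n) (Fin n) ℂ)
    (hφpd : ∀ k l, DifferentiableOn ℂ (fun q => φp q k l) U)
    (hφmd : ∀ k l, DifferentiableOn ℂ (fun q => φm q k l) U)
    (hφpu : ∀ p ∈ U, IsUnit (φp p).det)
    (hφmu : ∀ p ∈ U, IsUnit (φm p).det)
    (hAp : ∀ p ∈ U, ∀ (i : Fin n) (α : Fin d) (k l : Fin n),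
      brS n d κ (fun q => q.1 i α) (fun q => φp q k l) p
        = -κ * ∑ j : Fin n, ∑ q' : Fin n, rME n i k j q' * p.1 j α * φp p q' l)
    (hAm : ∀ p ∈ U, ∀ (i : Fin n) (α : Fin d) (k l : Fin n),
      brS n d κ (fun q => q.1 i α) (fun q => φm q k l) p
        = -κ * ∑ j : Fin n, ∑ q' : Fin n, rPE n i k j q' * p.1 j α * φm p q' l)
    (hBp : ∀ p ∈ U, ∀ (α : Fin d) (i : Fin n) (k l : Fin n),
      brS n d κ (fun q => q.2 α i) (fun q => φp q k l) p
        = κ * ∑ m : Fin n, ∑ q' : Fin n, p.2 α m * rME n m k i q' * φp p q' l)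
    (hBm : ∀ p ∈ U, ∀ (α : Fin d) (i : Fin n) (k l : Fin n),
      brS n d κ (fun q => q.2 α i) (fun q => φm q k l) p
        = κ * ∑ m : Fin n, ∑ q' : Fin n, p.2 α m * rPE n m k i q' * φm p q' l) :
    (∀ p ∈ U, ∀ (i : Fin n) (α : Fin d) (k l : Fin n),
      brS n d κ (fun q => q.1 i α) (fun q => (φp q * (φm q)⁻¹) k l) p
        = κ * ∑ j : Fin n,
            (tmul n (one2 n (φp p * (φm p)⁻¹)) (rPE n) i k j l
              - tmul n (rME n) (one2 n (φp p * (φm p)⁻¹)) i k j l) * p.1 j α) ∧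
    (∀ p ∈ U, ∀ (α : Fin d) (i : Fin n) (k l : Fin n),
      brS n d κ (fun q => q.2 α i) (fun q => (φp q * (φm q)⁻¹) k l) p
        = κ * ∑ m : Fin n, p.2 α m *
            (tmul n (rME n) (one2 n (φp p * (φm p)⁻¹)) m k i l
              - tmul n (one2 n (φp p * (φm p)⁻¹)) (rPE n) m k i l)) :=
  statement9_general n d κ U hU φp φm hφpd hφmd hφmu hAp hAm hBp hBm
end
end

section
/- Let n ≥ 1, κ ∈ ℂ∖{0}, and let (a,b) ∈ ℂⁿ × ℂⁿ be a point with G_i := 1 + Σ_{r=i}^n a_r b_r ≠ 0 for all 1 ≤ i ≤ n (set G_{n+1} := 1). Define the antisymmetric bilinear form ω on ℂⁿ × ℂⁿ by ω((u^a,u^b),(v^a,v^b)) := −(1/κ) Σ_{i=1}^n (u^a_i v^b_i − v^a_i u^b_i)/G_i + (1/(2κ)) Σ_{1≤i<s≤n} [(b_i u^a_i − a_i u^b_i)(b_s v^a_s + a_s v^b_s) − (b_i v^a_i − a_i v^b_i)(b_s u^a_s + a_s u^b_s)]/(G_i G_{i+1}), and the vectors X_{a_j}, X_{b_j} ∈ ℂⁿ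 × ℂⁿ by: (X_{a_j})^a_l = (κ/2) sgn(l−j) a_l a_j, (X_{a_j})^b_l = −(κ/2) a_j b_l for l ≠ j, (X_{a_j})^b_j = −κ G_j; (X_{b_j})^a_l = (κ/2) a_l b_j for l ≠ j, (X_{b_j})^a_j = κ G_j, (X_{b_j})^b_l = −(κ/2) sgn(l−j) b_l b_j. Then for every j ∈ {1,…,n} and every v = (v^a,v^b) ∈ ℂⁿ × ℂⁿ: ω(X_{a_j}, v) = −v^a_j and ω(X_{b_j}, v) = −v^b_j. Consequently, ω is nondegenerate at every such point. -/
/-!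
Write `P_i(u) = b_i u^a_i - a_i u^b_i` and `Q_i(u) = b_i u^a_i + a_i u^b_i`, so that the double
sum of `ω` is `∑_{i<s} (P_i(u) Q_s(v) - P_i(v) Q_s(u)) / (G_i G_{i+1})`. Since
`G_i - G_{i+1} = a_i b_i`, for `u = X_{a_j}` both `P_i(u) / (G_i G_{i+1})` and `Q_s(u)` are
discrete differences (of `[j < k] / G_k` and of `[k ≤ j] G_k`), so both inner sums telescope,
and what is left cancels the off-diagonal terms of the first sum of `ω`, leaving `-v^a_j`.
The substitution `(a, b, u, v) ↦ (b, a, -swap u, swap v)` leaves `ω` invariant and turns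
`X_{a_j}` into `X_{b_j}`, which gives the second identity. Nondegeneracy follows, as `ω(·, v)`
recovers every coordinate of `v`.
-/

open Matrix BigOperators

noncomputable section

attribute [local instance] Matrix.normedAddCommGroup Matrix.normedSpace

variable {n : ℕ}

section Telescoping

variable {M : Type*} [AddCommGroup M]

theorem Fin.sum_ite_Ico_telescope (g : Fin (n + 1) → M) {p q : ℕ} (hpq : p ≤ q) (hq : q ≤ n) :
    ∑ i : Fin n, (if p ≤ (i : ℕ) ∧ (i : ℕ) < q then g i.succ - g i.castSucc else 0) =
      g (Fin.ofNat (n + 1) q) - g (Fin.ofNat (n + 1) p) := by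
  set f : ℕ → M := fun k => g (Fin.ofNat (n + 1) k)
  have hf : ∀ i : Fin n, g i.succ - g i.castSucc = f (i + 1) - f i := fun i => by
    simp only [f]
    congr 2 <;> ext <;> simp [Nat.mod_eq_of_lt, i.isLt]
  simp only [hf]
  rw [Fin.sum_univ_eq_sum_range (fun k => if p ≤ k ∧ k < q then f (k + 1) - f k else 0),
    ← Finset.sum_filter, ← Finset.sum_Ico_sub f hpq]
  congr 1
  ext k
  simp only [Finset.mem_filter, Finset.mem_range, Finset.mem_Ico]
  omega

theorem Fin.sum_ite_lt_telescope (g : Fin (n + 1) → M) (s : Fin n) :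
    ∑ i : Fin n, (if i < s then g i.succ - g i.castSucc else 0) = g s.castSucc - g 0 := by
  have := Fin.sum_ite_Ico_telescope g (Nat.zero_le s) s.isLt.le
  convert this using 3 <;> simp

theorem Fin.sum_ite_gt_telescope (g : Fin (n + 1) → M) (s : Fin n) :
    ∑ i : Fin n, (if s < i then g i.succ - g i.castSucc else 0) = g (Fin.last n) - g s.succ := by
  have := Fin.sum_ite_Ico_telescope g s.isLt le_rfl
  convert this using 3
  · rename_i i _; simp only [Fin.lt_def, Nat.succ_le_iff, i.isLt, and_true]
  · ext; simp
  · ext; simp [Nat.mod_eq_of_lt (Nat.succ_lt_succ s.isLt)]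

lemma Fin.sum_ite_le_eq_add (x : Fin n → M) (i : Fin n) :
    ∑ r : Fin n, (if (i : ℕ) ≤ r then x r else 0) =
      x i + ∑ r : Fin n, (if (i : ℕ) + 1 ≤ r then x r else 0) := by
  rw [← Fintype.sum_ite_eq' i x, ← Finset.sum_add_distrib]
  refine Finset.sum_congr rfl fun r _ => ?_
  split_ifs <;> simp_all [Fin.ext_iff] <;> omega

lemma Fin.sum_sum_ite_lt_telescope {R : Type*} [CommRing R] (g h : Fin (n + 1) → R)
    (x y : Fin n → R) :
    ∑ i : Fin n, ∑ s : Fin n,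
        (if i < s then (g i.succ - g i.castSucc) * y s - x i * (h s.succ - h s.castSucc) else 0) =
      ∑ s : Fin n, (g s.castSucc - g 0) * y s - ∑ i : Fin n, x i * (h (Fin.last n) - h i.succ) := by
  have ite_sub (c : Prop) [Decidable c] (p q : R) :
      (if c then p - q else 0) = (if c then p else 0) - (if c then q else 0) := by
    rw [ite_sub_ite, sub_zero]
  simp only [ite_sub, Finset.sum_sub_distrib]
  rw [Finset.sum_comm]
  congr 1 <;> refine Finset.sum_congr rfl fun i _ => ?_
  · rw [← Fin.sum_ite_lt_telescope, Finset.sum_mul]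
    exact Finset.sum_congr rfl fun s _ => by rw [ite_mul, zero_mul]
  · rw [← Fin.sum_ite_gt_telescope, Finset.mul_sum]
    exact Finset.sum_congr rfl fun s _ => by rw [mul_ite, mul_zero]

end Telescoping

lemma csgn_natCast_sub (l j : Fin n) :
    csgn (((l : ℕ) : ℤ) - ((j : ℕ) : ℤ)) = if j < l then 1 else if l < j then -1 else 0 := by
  rcases lt_trichotomy l j with h | rfl | h
  · simp [csgn, h, h.not_gt, Int.sign_eq_neg_one_of_neg (sub_neg.mpr (Int.ofNat_lt.mpr h))]
  · simp [csgn]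
  · simp [csgn, h, Int.sign_eq_one_of_pos (sub_pos.mpr (Int.ofNat_lt.mpr h))]

section HamiltonianVectors

variable (κ : ℂ) (a b : Fin n → ℂ) (G : Fin (n + 1) → ℂ)

def omegaForm (u v : (Fin n → ℂ) × (Fin n → ℂ)) : ℂ :=
  -(1 / κ) * (∑ i : Fin n, (u.1 i * v.2 i - v.1 i * u.2 i) / G i.castSucc)
    + 1 / (2 * κ) * ∑ i : Fin n, ∑ s : Fin n,
        (if i < s then
          ((b i * u.1 i - a i * u.2 i) * (b s * v.1 s + a s * v.2 s)
            - (b i * v.1 i - a i * v.2 i) * (b s * u.1 s + a s * u.2 s))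
            / (G i.castSucc * G i.succ)
          else 0)

def hamVecA (j : Fin n) : (Fin n → ℂ) × (Fin n → ℂ) :=
  (fun l : Fin n => κ / 2 * csgn (((l : ℕ) : ℤ) - ((j : ℕ) : ℤ)) * a l * a j,
   fun l : Fin n => if l = j then -κ * G j.castSucc else -(κ / 2) * a j * b l)

def hamVecB (j : Fin n) : (Fin n → ℂ) × (Fin n → ℂ) :=
  (fun l : Fin n => if l = j then κ * G j.castSucc else κ / 2 * a l * b j,
   fun l : Fin n => -(κ / 2) * csgn (((l : ℕ) : ℤ) - ((j : ℕ) : ℤ)) * b l * b j)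

lemma omegaForm_neg_swap (u v : (Fin n → ℂ) × (Fin n → ℂ)) :
    omegaForm κ b a G (-u.swap) v.swap = omegaForm κ a b G u v := by
  simp only [omegaForm, Prod.fst_neg, Prod.snd_neg, Prod.fst_swap, Prod.snd_swap, Pi.neg_apply]
  congr 2
  · exact Finset.sum_congr rfl fun i _ => by ring
  · refine Finset.sum_congr rfl fun i _ => Finset.sum_congr rfl fun s _ => ?_
    split_ifs <;> ring

lemma hamVecB_eq_neg_swap (j : Fin n) : hamVecB κ a b G j = -(hamVecA κ b a G j).swap := by
  ext l <;> simp only [hamVecA, hamVecB, Prod.swap, Prod.fst_neg, Prod.snd_neg, Pi.neg_apply]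
  · split_ifs <;> ring
  · ring

end HamiltonianVectors

section

variable {κ : ℂ} {a b : Fin n → ℂ} {G : Fin (n + 1) → ℂ}

lemma hamVecA_skew_div (hG : ∀ i, G i ≠ 0)
    (hGsucc : ∀ i : Fin n, G i.castSucc = a i * b i + G i.succ) (j i : Fin n) :
    (b i * (hamVecA κ a b G j).1 i - a i * (hamVecA κ a b G j).2 i) / (G i.castSucc * G i.succ) =
      κ * a j * ((if j.castSucc < i.succ then (G i.succ)⁻¹ else 0) -
        (if j.castSucc < i.castSucc then (G i.castSucc)⁻¹ else 0)) := by
  have := hG i.castSucc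
  have := hG i.succ
  rcases lt_trichotomy i j with h | rfl | h
  · simp [hamVecA, csgn_natCast_sub, h, h.ne, h.not_gt, h.not_ge]
    left
    ring
  · simp [hamVecA, csgn_natCast_sub]
    field_simp
  · simp [hamVecA, csgn_natCast_sub, h, h.ne', h.le]
    field_simp
    rw [hGsucc]
    ring

lemma hamVecA_sym (hGsucc : ∀ i : Fin n, G i.castSucc = a i * b i + G i.succ) (j s : Fin n) :
    b s * (hamVecA κ a b G j).1 s + a s * (hamVecA κ a b G j).2 s =
      κ * a j * ((if s.succ ≤ j.castSucc then G s.succ else 0) -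
        (if s.castSucc ≤ j.castSucc then G s.castSucc else 0)) := by
  rcases lt_trichotomy s j with h | rfl | h
  · simp [hamVecA, csgn_natCast_sub, h, h.ne, h.not_gt, h.le]
    rw [hGsucc]
    ring
  · simp [hamVecA, csgn_natCast_sub]
    ring
  · simp [hamVecA, csgn_natCast_sub, h, h.ne', h.not_gt, h.not_ge]
    ring

lemma hamVecA_cross (hG : ∀ i, G i ≠ 0) (j i : Fin n) (v : (Fin n → ℂ) × (Fin n → ℂ)) :
    ((hamVecA κ a b G j).1 i * v.2 i - v.1 i * (hamVecA κ a b G j).2 i) / G i.castSucc =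
      (if i = j then κ * v.1 j else 0) + κ * a j / 2 *
        ((if j < i then (b i * v.1 i + a i * v.2 i) / G i.castSucc else 0) +
          (if i < j then (b i * v.1 i - a i * v.2 i) / G i.castSucc else 0)) := by
  have := hG i.castSucc
  rcases lt_trichotomy i j with h | rfl | h
  · simp [hamVecA, csgn_natCast_sub, h, h.ne, h.not_gt]
    ring
  · simp [hamVecA, csgn_natCast_sub]
    field_simp
  · simp [hamVecA, csgn_natCast_sub, h, h.ne', h.not_gt]
    ring

theorem omegaForm_hamVecA (hκ : κ ≠ 0) (hG : ∀ i, G i ≠ 0)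
    (hGsucc : ∀ i : Fin n, G i.castSucc = a i * b i + G i.succ) (j : Fin n)
    (v : (Fin n → ℂ) × (Fin n → ℂ)) :
    omegaForm κ a b G (hamVecA κ a b G j) v = -v.1 j := by
  set u := hamVecA κ a b G j
  set A : Fin n → ℂ := fun i => if j < i then (b i * v.1 i + a i * v.2 i) / G i.castSucc else 0
  set B : Fin n → ℂ := fun i => if i < j then (b i * v.1 i - a i * v.2 i) / G i.castSucc else 0
  have hcross : ∑ i : Fin n, (u.1 i * v.2 i - v.1 i * u.2 i) / G i.castSucc =
      κ * v.1 j + κ * a j / 2 * ∑ i : Fin n, (A i + B i) := by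
    simp only [u, hamVecA_cross hG, Finset.sum_add_distrib, Fintype.sum_ite_eq', ← Finset.mul_sum]
    rfl
  have hdouble : ∑ i : Fin n, ∑ s : Fin n,
      (if i < s then
        ((b i * u.1 i - a i * u.2 i) * (b s * v.1 s + a s * v.2 s)
          - (b i * v.1 i - a i * v.2 i) * (b s * u.1 s + a s * u.2 s))
          / (G i.castSucc * G i.succ)
        else 0) = κ * a j * ∑ i : Fin n, (A i + B i) := by
    set g : Fin (n + 1) → ℂ := fun k => if j.castSucc < k then (G k)⁻¹ else 0
    set h : Fin (n + 1) → ℂ := fun k => if k ≤ j.castSucc then G k else 0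
    calc _ = ∑ i : Fin n, ∑ s : Fin n, (if i < s then
            (g i.succ - g i.castSucc) * (κ * a j * (b s * v.1 s + a s * v.2 s)) -
              κ * a j * (b i * v.1 i - a i * v.2 i) / (G i.castSucc * G i.succ) *
                (h s.succ - h s.castSucc) else 0) := by
          refine Finset.sum_congr rfl fun i _ => Finset.sum_congr rfl fun s _ => ?_
          split_ifs
          · rw [hamVecA_sym hGsucc]
            linear_combination
              (b s * v.1 s + a s * v.2 s) * hamVecA_skew_div (κ := κ) hG hGsucc j i
          · rfl
      _ = ∑ s : Fin n, (g s.castSucc - g 0) * (κ * a j * (b s * v.1 s + a s * v.2 s)) -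
            ∑ i : Fin n, κ * a j * (b i * v.1 i - a i * v.2 i) / (G i.castSucc * G i.succ) *
              (h (Fin.last n) - h i.succ) := Fin.sum_sum_ite_lt_telescope g h _ _
      _ = κ * a j * ∑ i : Fin n, (A i + B i) := by
          rw [sub_eq_add_neg, ← Finset.sum_neg_distrib, ← Finset.sum_add_distrib, Finset.mul_sum]
          refine Finset.sum_congr rfl fun i _ => ?_
          have := hG i.succ
          rcases lt_trichotomy i j with hij | rfl | hij
          · simp [g, h, A, B, hij, hij.not_gt]
            field_simp
          · simp [g, h, A, B]
          · simp [g, h, A, B, hij, hij.not_gt]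
            ring
  rw [omegaForm, hcross, hdouble]
  field_simp
  ring

theorem omegaForm_hamVecB (hκ : κ ≠ 0) (hG : ∀ i, G i ≠ 0)
    (hGsucc : ∀ i : Fin n, G i.castSucc = a i * b i + G i.succ) (j : Fin n)
    (v : (Fin n → ℂ) × (Fin n → ℂ)) :
    omegaForm κ a b G (hamVecB κ a b G j) v = -v.2 j := by
  rw [hamVecB_eq_neg_swap, ← Prod.swap_swap v, omegaForm_neg_swap,
    omegaForm_hamVecA hκ hG fun i => by rw [hGsucc, mul_comm]]
  rfl

end

theorem statement18_general (n : ℕ) (κ : ℂ) (hκ : κ ≠ 0)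
    (a b : Fin n → ℂ) (G : Fin (n + 1) → ℂ)
    (hG : ∀ j, G j = 1 + ∑ r : Fin n, (if (j : ℕ) ≤ (r : ℕ) then a r * b r else 0))
    (hG0 : ∀ i : Fin n, G i.castSucc ≠ 0)
    (ω : ((Fin n → ℂ) × (Fin n → ℂ)) → ((Fin n → ℂ) × (Fin n → ℂ)) → ℂ)
    (hω : ∀ u v, ω u v =
      -(1 / κ) * (∑ i : Fin n, (u.1 i * v.2 i - v.1 i * u.2 i) / G i.castSucc)
        + 1 / (2 * κ) * ∑ i : Fin n, ∑ s : Fin n,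
            (if i < s then
              ((b i * u.1 i - a i * u.2 i) * (b s * v.1 s + a s * v.2 s)
                - (b i * v.1 i - a i * v.2 i) * (b s * u.1 s + a s * u.2 s))
                / (G i.castSucc * G i.succ)
              else 0))
    (Xa Xb : Fin n → (Fin n → ℂ) × (Fin n → ℂ))
    (hXa : ∀ j, Xa j =
      (fun l : Fin n => κ / 2 * csgn (((l : ℕ) : ℤ) - ((j : ℕ) : ℤ)) * a l * a j,
       fun l : Fin n => if l = j then -κ * G j.castSucc else -(κ / 2) * a j * b l))
    (hXb : ∀ j, Xb j =
      (fun l : Fin n => if l = j then κ * G j.castSucc else κ / 2 * a l * b j,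
       fun l : Fin n => -(κ / 2) * csgn (((l : ℕ) : ℤ) - ((j : ℕ) : ℤ)) * b l * b j)) :
    (∀ (j : Fin n) (v : (Fin n → ℂ) × (Fin n → ℂ)),
        ω (Xa j) v = -v.1 j ∧ ω (Xb j) v = -v.2 j) ∧
      (∀ v : (Fin n → ℂ) × (Fin n → ℂ), (∀ u, ω u v = 0) → v = 0) := by
  have hGsucc (i : Fin n) : G i.castSucc = a i * b i + G i.succ := by
    rw [hG, hG, Fin.val_castSucc, Fin.val_succ, Fin.sum_ite_le_eq_add]
    ring
  have hGlast : G (Fin.last n) = 1 := by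
    rw [hG, Finset.sum_eq_zero fun r _ => if_neg (Nat.not_le.mpr r.is_lt), add_zero]
  have hGne : ∀ i, G i ≠ 0 := Fin.lastCases (by rw [hGlast]; exact one_ne_zero) hG0
  obtain rfl : ω = omegaForm κ a b G := funext₂ hω
  obtain rfl : Xa = hamVecA κ a b G := funext hXa
  obtain rfl : Xb = hamVecB κ a b G := funext hXb
  have hpair (j : Fin n) (v : (Fin n → ℂ) × (Fin n → ℂ)) :=
    And.intro (omegaForm_hamVecA hκ hGne hGsucc j v) (omegaForm_hamVecB hκ hGne hGsucc j v)
  refine ⟨hpair, fun v hv => Prod.ext (funext fun j => ?_) (funext fun j => ?_)⟩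
  · simpa [hv] using (hpair j v).1
  · simpa [hv] using (hpair j v).2

/-- the `2`-form `ω` pairs the Hamiltonian vector fields `X_{a_j}`, `X_{b_j}`
with an arbitrary vector `v` to give `−v^a_j`, `−v^b_j`; consequently `ω` is nondegenerate. -/
theorem statement18 (n : ℕ) (hn : 1 ≤ n) (κ : ℂ) (hκ : κ ≠ 0)
    (a b : Fin n → ℂ) (G : Fin (n + 1) → ℂ)
    (hG : ∀ j, G j = 1 + ∑ r : Fin n, (if (j : ℕ) ≤ (r : ℕ) then a r * b r else 0))
    (hG0 : ∀ i : Fin n, G i.castSucc ≠ 0)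
    (ω : ((Fin n → ℂ) × (Fin n → ℂ)) → ((Fin n → ℂ) × (Fin n → ℂ)) → ℂ)
    (hω : ∀ u v, ω u v =
      -(1 / κ) * (∑ i : Fin n, (u.1 i * v.2 i - v.1 i * u.2 i) / G i.castSucc)
        + 1 / (2 * κ) * ∑ i : Fin n, ∑ s : Fin n,
            (if i < s then
              ((b i * u.1 i - a i * u.2 i) * (b s * v.1 s + a s * v.2 s)
                - (b i * v.1 i - a i * v.2 i) * (b s * u.1 s + a s * u.2 s))
                / (G i.castSucc * G i.succ)
              else 0))
    (Xa Xb : Fin n → (Fin n → ℂ) × (Fin n → ℂ))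
    (hXa : ∀ j, Xa j =
      (fun l : Fin n => κ / 2 * csgn (((l : ℕ) : ℤ) - ((j : ℕ) : ℤ)) * a l * a j,
       fun l : Fin n => if l = j then -κ * G j.castSucc else -(κ / 2) * a j * b l))
    (hXb : ∀ j, Xb j =
      (fun l : Fin n => if l = j then κ * G j.castSucc else κ / 2 * a l * b j,
       fun l : Fin n => -(κ / 2) * csgn (((l : ℕ) : ℤ) - ((j : ℕ) : ℤ)) * b l * b j)) :
    (∀ (j : Fin n) (v : (Fin n → ℂ) × (Fin n → ℂ)),
        ω (Xa j) v = -v.1 j ∧ ω (Xb j) v = -v.2 j) ∧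
      (∀ v : (Fin n → ℂ) × (Fin n → ℂ), (∀ u, ω u v = 0) → v = 0) :=
  statement18_general n κ hκ a b G hG hG0 ω hω Xa Xb hXa hXb
end
end

section
/- Let n, d ≥ 1, κ ∈ ℂ∖{0}, c ∈ ℂ∖{0}, and let p = (A,B) ∈ S(n,d) be the point with A_{n1} = c, B_{1n} = −1/c (so 1 + A_n^1 B_n^1 = 0), and all other entries of A and B equal to zero. Let π(p) be the 2nd × 2nd antisymmetric matrix whose entries are the coordinate brackets {A_i^α, A_k^β}_κ, {A_i^α, B_k^β}_κ, {B_i^α, B_k^β}_κ evaluated at p. Then rank π(p) = 2(n−1)(d−1). In particular, for n, d ≥ 1 the Poisson bracket {·,·}_κ on S(n,d) is not nondegenerate at every point of S(n,d). -/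
open Matrix BigOperators

noncomputable section

attribute [local instance] Matrix.normedAddCommGroup Matrix.normedSpace

/-!
At `p` the matrices `A` and `B` are single matrix units in mirrored positions (row `n`, column `1`).
Every `AA`- and `BB`-bracket is then a product of two entries that are both nonzero only at that
one coordinate, where the sign factor vanishes. The `AB`-bracket is diagonal: since `n` is the
largest row index and `1` the smallest column index, the two sums pick up the entry `A_n^1 B_n^1`
exactly on row `n` or column `1`, where the diagonal entry becomes `κ (1 + A_n^1 B_n^1) = 0`; it is
`κ` elsewhere. Hence `π(p) = [[0, D], [-D, 0]]` with `D` diagonal with `(n-1)(d-1)` nonzero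
entries, a column permutation of a diagonal matrix, so its rank is `2(n-1)(d-1) < 2nd`.
-/

theorem Matrix.rank_fromBlocks_zero_diagonal_neg_diagonal_zero {m K : Type*} [Fintype m]
    [DecidableEq m] [Field K] [DecidableEq K] (g : m → K) :
    (fromBlocks 0 (diagonal g) (-diagonal g) 0).rank = 2 * Fintype.card {i // g i ≠ 0} := by
  have hswap : fromBlocks 0 (diagonal g) (-diagonal g) 0 =
      (diagonal (Sum.elim g (-g))).submatrix (Equiv.refl _) (Equiv.sumComm m m) := by
    ext (i | i) (j | j) <;> simp [diagonal_apply]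
  rw [hswap, rank_submatrix, rank_diagonal, Fintype.card_congr Equiv.subtypeSum,
    Fintype.card_sum]
  simp only [Sum.elim_inl, Sum.elim_inr, Pi.neg_apply, ne_eq, neg_eq_zero, two_mul]
  congr 1

theorem Fintype.card_prod_ne_and_ne {ι ι' : Type*} [Fintype ι] [Fintype ι'] [DecidableEq ι]
    [DecidableEq ι'] (a : ι) (b : ι') :
    card {x : ι × ι' // x.1 ≠ a ∧ x.2 ≠ b} = (card ι - 1) * (card ι' - 1) := by
  rw [card_congr (Equiv.subtypeProdEquivProd (p := (· ≠ a)) (q := (· ≠ b))), card_prod,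
    card_subtype_compl, card_subtype_compl, card_subtype_eq, card_subtype_eq]

section SinglePoint

variable {n d : ℕ} (κ : ℂ) {p : Snd n d} {L : Fin n} {Z : Fin d} {a b : ℂ}

theorem pAA_eq_zero_of_fst_eq_single (hA : p.1 = single L Z a) (i k : Fin n) (α β : Fin d) :
    pAA n d κ p i k α β = 0 := by
  rw [pAA, hA]
  by_cases h : L = k ∧ Z = α ∧ L = i ∧ Z = β
  · obtain ⟨rfl, rfl, rfl, rfl⟩ := h
    simp [csgn]
  · rw [single_apply, single_apply]
    split_ifs <;> simp_all

theorem pBB_eq_zero_of_snd_eq_single (hB : p.2 = single Z L b) (i k : Fin n) (α β : Fin d) :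
    pBB n d κ p i k α β = 0 := by
  rw [pBB, hB]
  by_cases h : Z = α ∧ L = k ∧ Z = β ∧ L = i
  · obtain ⟨rfl, rfl, rfl, rfl⟩ := h
    simp [csgn]
  · rw [single_apply, single_apply]
    split_ifs <;> simp_all

theorem pAB_eq_diagonal_of_eq_single (hL : ∀ i, i ≤ L) (hZ : ∀ α, Z ≤ α)
    (hA : p.1 = single L Z a) (hB : p.2 = single Z L b) (i k : Fin n) (α β : Fin d) :
    pAB n d κ p i α k β =
      diagonal (fun x : Fin n × Fin d => if x.1 = L ∨ x.2 = Z then κ * (1 + a * b) else κ)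
        (i, α) (k, β) := by
  rw [pAB, Fintype.sum_eq_single L (fun s hs => by simp [hA, hs.symm]),
    Fintype.sum_eq_single Z (fun μ hμ => by simp [hA, hμ.symm]), hA, hB, diagonal_apply]
  simp only [cdelta, single_apply, (hL i).lt_iff_ne, (hZ α).lt_iff_ne, eq_comm (a := L),
    eq_comm (a := Z), Prod.mk.injEq]
  rcases eq_or_ne i k with rfl | hik <;> rcases eq_or_ne α β with rfl | hαβ <;>
    rcases eq_or_ne i L with rfl | hi <;> rcases eq_or_ne α Z with rfl | hα <;>
    simp [*] <;> grind

end SinglePoint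

/-- at the point `p` with `A_{n1} = c`, `B_{1n} = −1/c` and all other entries
zero, the Poisson bivector matrix has rank `2(n−1)(d−1)`; in particular the bracket `{·,·}_κ`
is degenerate at `p`. -/
theorem statement19 (n d : ℕ) (hn : 1 ≤ n) (hd : 1 ≤ d) (κ : ℂ) (hκ : κ ≠ 0)
    (c : ℂ) (hc : c ≠ 0)
    (p : Snd n d)
    (hp1 : p.1 = Matrix.of fun (i : Fin n) (α : Fin d) => if (i : ℕ) = n - 1 ∧ (α : ℕ) = 0 then c else 0)
    (hp2 : p.2 = Matrix.of fun (α : Fin d) (i : Fin n) => if (i : ℕ) = n - 1 ∧ (α : ℕ) = 0 then -(1 / c) else 0)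
    (piM : Matrix ((Fin n × Fin d) ⊕ (Fin n × Fin d)) ((Fin n × Fin d) ⊕ (Fin n × Fin d)) ℂ)
    (hAA : ∀ (i k : Fin n) (α β : Fin d),
      piM (Sum.inl (i, α)) (Sum.inl (k, β)) = pAA n d κ p i k α β)
    (hAB : ∀ (i k : Fin n) (α β : Fin d),
      piM (Sum.inl (i, α)) (Sum.inr (k, β)) = pAB n d κ p i α k β)
    (hBA : ∀ (i k : Fin n) (α β : Fin d),
      piM (Sum.inr (i, α)) (Sum.inl (k, β)) = -pAB n d κ p k β i α)
    (hBB : ∀ (i k : Fin n) (α β : Fin d),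
      piM (Sum.inr (i, α)) (Sum.inr (k, β)) = pBB n d κ p i k α β) :
    piM.rank = 2 * (n - 1) * (d - 1) ∧ ¬IsUnit piM.det := by
  let L : Fin n := ⟨n - 1, by omega⟩
  let Z : Fin d := ⟨0, hd⟩
  have hA : p.1 = single L Z c := by
    ext i α
    simp [hp1, single_apply, L, Z, Fin.ext_iff, eq_comm]
  have hB : p.2 = single Z L (-(1 / c)) := by
    ext α i
    simp [hp2, single_apply, L, Z, Fin.ext_iff, eq_comm, and_comm]
  have hL (i : Fin n) : i ≤ L := Fin.le_def.2 (by simp [L]; omega)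
  have hZ (α : Fin d) : Z ≤ α := Fin.le_def.2 (Nat.zero_le _)
  set g : Fin n × Fin d → ℂ := fun x => if x.1 = L ∨ x.2 = Z then κ * (1 + c * -(1 / c)) else κ
  have hpiM : piM = fromBlocks 0 (diagonal g) (-diagonal g) 0 := by
    ext (⟨i, α⟩ | ⟨i, α⟩) (⟨k, β⟩ | ⟨k, β⟩)
    · simp [hAA, pAA_eq_zero_of_fst_eq_single κ hA]
    · simp [hAB, pAB_eq_diagonal_of_eq_single κ hL hZ hA hB, g]
    · rw [hBA, pAB_eq_diagonal_of_eq_single κ hL hZ hA hB, ← transpose_apply (diagonal _),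
        diagonal_transpose]
      rfl
    · simp [hBB, pBB_eq_zero_of_snd_eq_single κ hB]
  have hcard : Fintype.card {x // g x ≠ 0} = Fintype.card {x : Fin n × Fin d // x.1 ≠ L ∧ x.2 ≠ Z} :=
    Fintype.card_congr (Equiv.subtypeEquivRight fun x => by simp [g, hc, hκ, not_or])
  have hrank : piM.rank = 2 * (n - 1) * (d - 1) := by
    rw [hpiM, rank_fromBlocks_zero_diagonal_neg_diagonal_zero, hcard,
      Fintype.card_prod_ne_and_ne, Fintype.card_fin, Fintype.card_fin, mul_assoc]
  refine ⟨hrank, fun hdet => ?_⟩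
  have hfull := rank_of_isUnit piM ((isUnit_iff_isUnit_det piM).2 hdet)
  simp only [hrank, mul_assoc, Fintype.card_sum, Fintype.card_prod, Fintype.card_fin] at hfull
  have : (n - 1) * (d - 1) < n * d := Nat.mul_lt_mul'' (by omega) (by omega)
  omega
end
end
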